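/- arXiv:1810.11144 — 12 statements merged into one kernel-verified Lean document; each statement's English description precedes it below -/
import Mathlib

section
/- Let L be an n×n complex generalized permutation matrix and let D be the diagonal matrix whose k-th diagonal entry is the unique nonzero entry of column k of L when column k is nonzero and 0 otherwise. Let n_z be the number of zero columns of L (equivalently, n_z = n − rank L). Then the number of permutations σ of Fin n satisfying L = P_σ · D equals n_z! (in particular, the decomposition L = P_σ · D is unique if and only if n_z ≤ 1). -/
/-- The permutation matrix of `σ`: entry `(j,k)` is `1` iff `j = σ k`. -/
def permMat (n : ℕ) (σ : Equiv.Perm (Fin n)) : Matrix (Fin n) (Fin n) ℂ :=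
  Matrix.of fun j k => if j = σ k then 1 else 0

/-- A generalized permutation matrix: at most one nonzero entry in each row and column. -/
def IsGPM {n : ℕ} (L : Matrix (Fin n) (Fin n) ℂ) : Prop :=
  (∀ j k k', L j k ≠ 0 → L j k' ≠ 0 → k = k') ∧
  (∀ j j' k, L j k ≠ 0 → L j' k ≠ 0 → j = j')

open Matrix in
noncomputable def rowOf {n : ℕ} (L : Matrix (Fin n) (Fin n) ℂ) (k : Fin n) : Fin n :=
  if h : ∃ j, L j k ≠ 0 then h.choose else k

lemma rowOf_spec {n : ℕ} (L : Matrix (Fin n) (Fin n) ℂ) {k : Fin n}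
    (h : ∃ j, L j k ≠ 0) : L (rowOf L k) k ≠ 0 := by
  rw [rowOf, dif_pos h]; exact h.choose_spec

lemma permMat_mul_diag {n : ℕ} (σ : Equiv.Perm (Fin n)) (d : Fin n → ℂ) (j k : Fin n) :
    (permMat n σ * Matrix.diagonal d) j k = if j = σ k then d k else 0 := by
  rw [Matrix.mul_diagonal, permMat]
  simp [ite_mul]

lemma permMat_det_isUnit {n : ℕ} (σ : Equiv.Perm (Fin n)) :
    IsUnit (permMat n σ).det := by
  have h : permMat n σ = (Equiv.Perm.permMatrix ℂ σ).transpose := by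
    ext j k
    simp [permMat, Equiv.Perm.permMatrix, PEquiv.toMatrix, Equiv.toPEquiv, eq_comm]
  rw [h, Matrix.transpose, ← Matrix.transpose, Matrix.det_transpose, Matrix.det_permutation]
  simp [isUnit_iff_ne_zero]

theorem stmt1 (n : ℕ) (L : Matrix (Fin n) (Fin n) ℂ) (hL : IsGPM L)
    (d : Fin n → ℂ)
    (hd1 : ∀ k j, L j k ≠ 0 → d k = L j k)
    (hd2 : ∀ k, (∀ j, L j k = 0) → d k = 0) :
    {k : Fin n | ∀ j, L j k = 0}.ncard = n - L.rank ∧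
    Nat.card {σ : Equiv.Perm (Fin n) // L = permMat n σ * Matrix.diagonal d}
      = ({k : Fin n | ∀ j, L j k = 0}.ncard).factorial ∧
    ((∃! σ : Equiv.Perm (Fin n), L = permMat n σ * Matrix.diagonal d) ↔
      {k : Fin n | ∀ j, L j k = 0}.ncard ≤ 1) := by
  classical
  set S : Set (Fin n) := {k | ∃ j, L j k ≠ 0} with hS
  set Z : Set (Fin n) := {k : Fin n | ∀ j, L j k = 0} with hZ
  have hZS : Z = Sᶜ := by
    ext k; simp [hZ, hS]
  set r : Fin n → Fin n := rowOf L with hr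
  -- key characterization
  have key : ∀ σ : Equiv.Perm (Fin n),
      L = permMat n σ * Matrix.diagonal d ↔ ∀ k ∈ S, σ k = r k := by
    intro σ
    constructor
    · intro hEq k hk
      obtain ⟨j, hj⟩ := hk
      have hjr : j = r k := hL.2 j (r k) k hj (rowOf_spec L ⟨j, hj⟩)
      rw [hEq, permMat_mul_diag] at hj
      have h : j = σ k := by
        by_contra h
        rw [if_neg h] at hj
        exact hj rfl
      rw [← h]
      exact hjr
    · intro hσ
      ext j k
      rw [permMat_mul_diag]
      by_cases hk : k ∈ S
      · rw [hσ k hk]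
        by_cases hj : j = r k
        · subst hj
          rw [if_pos rfl]
          exact (hd1 k _ (rowOf_spec L hk)).symm
        · rw [if_neg hj]
          by_contra hne
          exact hj (hL.2 j (r k) k hne (rowOf_spec L hk))
      · have hk0 : ∀ j, L j k = 0 := by
          simpa [hS, not_exists] using hk
        rw [hd2 k hk0, hk0 j]; simp
  -- r is injective on S
  have hinj : Set.InjOn r S := by
    intro k hk k' hk' hkk
    exact hL.1 (r k) k k' (rowOf_spec L hk) (hkk ▸ rowOf_spec L hk')
  -- construct σ₀
  have hcard : Fintype.card ↥(Sᶜ) = Fintype.card ↥((r '' S)ᶜ) := by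
    rw [Fintype.card_compl_set, Fintype.card_compl_set]
    congr 1
    rw [← Set.toFinset_card, ← Set.toFinset_card, ← Set.ncard_eq_toFinset_card',
      ← Set.ncard_eq_toFinset_card', Set.ncard_image_of_injOn hinj]
  let e1 : ↥S ≃ ↥(r '' S) := (hinj.bijOn_image).equiv r
  let e2 : ↥(Sᶜ) ≃ ↥((r '' S)ᶜ) := Fintype.equivOfCardEq hcard
  let σ₀ : Equiv.Perm (Fin n) :=
    (Equiv.Set.sumCompl S).symm.trans ((e1.sumCongr e2).trans (Equiv.Set.sumCompl (r '' S)))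
  have hσ₀ : ∀ k ∈ S, σ₀ k = r k := by
    intro k hk
    simp only [σ₀, Equiv.trans_apply, Equiv.Set.sumCompl_symm_apply_of_mem hk,
      Equiv.sumCongr_apply, Sum.map_inl, Equiv.Set.sumCompl_apply_inl]
    rfl
  -- the equiv counting solutions
  let Φ : {σ : Equiv.Perm (Fin n) // L = permMat n σ * Matrix.diagonal d} ≃
      {τ : Equiv.Perm (Fin n) // ∀ a, ¬ a ∈ Sᶜ → τ a = a} :=
    { toFun := fun σ => ⟨σ₀⁻¹ * σ.1, by
        intro a ha
        have ha' : a ∈ S := by simpa using ha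
        have := (key σ.1).1 σ.2 a ha'
        simp only [Equiv.Perm.mul_apply]
        rw [this, ← hσ₀ a ha']
        simp⟩
      invFun := fun τ => ⟨σ₀ * τ.1, by
        rw [key]
        intro k hk
        simp only [Equiv.Perm.mul_apply]
        rw [τ.2 k (by simpa using hk), hσ₀ k hk]⟩
      left_inv := fun σ => by simp
      right_inv := fun τ => by simp }
  have hcount : Nat.card {σ : Equiv.Perm (Fin n) // L = permMat n σ * Matrix.diagonal d}
      = (Z.ncard).factorial := by
    rw [Nat.card_congr (Φ.trans (Equiv.Perm.subtypeEquivSubtypePerm (· ∈ Sᶜ)).symm)]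
    rw [Nat.card_eq_fintype_card, Fintype.card_perm]
    congr 1
    rw [hZS, Set.ncard_eq_toFinset_card', Set.toFinset_card]
  -- rank
  have hL0 : L = permMat n σ₀ * Matrix.diagonal d := (key σ₀).2 hσ₀
  have hrank : L.rank = n - Z.ncard := by
    rw [hL0, Matrix.rank_mul_eq_right_of_isUnit_det _ _ (permMat_det_isUnit σ₀),
      Matrix.rank_diagonal]
    have : ∀ i, d i ≠ 0 ↔ i ∈ S := by
      intro i
      constructor
      · intro hdi
        by_contra hi
        exact hdi (hd2 i (by simpa [hS, not_exists] using hi))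
      · intro hi
        rw [hd1 i _ (rowOf_spec L hi)]
        exact rowOf_spec L hi
    have h2 : Fintype.card {i // d i ≠ 0} = Fintype.card ↥S :=
      Fintype.card_congr (Equiv.subtypeEquiv (Equiv.refl _) (by simpa using this))
    rw [h2, hZS]
    have e3 : Sᶜ.ncard = Fintype.card ↥(Sᶜ) := by
      rw [Set.ncard_eq_toFinset_card', Set.toFinset_card]
    rw [e3, Fintype.card_compl_set, Fintype.card_fin]
    have hle : Fintype.card ↥S ≤ n := by
      simpa using Fintype.card_subtype_le (· ∈ S)
    omega
  have hZn : Z.ncard ≤ n := by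
    rw [Set.ncard_eq_toFinset_card']
    simpa using Finset.card_le_card (Finset.subset_univ Z.toFinset)
  refine ⟨by omega, hcount, ?_⟩
  -- uniqueness iff
  have hpos : 0 < Nat.card {σ : Equiv.Perm (Fin n) // L = permMat n σ * Matrix.diagonal d} := by
    rw [hcount]; exact Nat.factorial_pos _
  constructor
  · intro ⟨σ, hσ, huniq⟩
    have h1 : Nat.card {σ : Equiv.Perm (Fin n) // L = permMat n σ * Matrix.diagonal d} = 1 := by
      rw [Nat.card_eq_one_iff_exists]
      exact ⟨⟨σ, hσ⟩, fun y => Subtype.ext (huniq y.1 y.2)⟩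
    rw [h1] at hcount
    exact Nat.factorial_eq_one.mp hcount.symm
  · intro hle
    have h1 : Nat.card {σ : Equiv.Perm (Fin n) // L = permMat n σ * Matrix.diagonal d} = 1 := by
      rw [hcount]; exact Nat.factorial_eq_one.mpr hle
    obtain ⟨x, hx⟩ := Nat.card_eq_one_iff_exists.mp h1
    exact ⟨x.1, x.2, fun y hy => by simpa using congrArg Subtype.val (hx ⟨y, hy⟩)⟩
end

section
/- Let L be an n×n complex generalized permutation matrix and let D be the diagonal matrix whose k-th diagonal entry is the unique nonzero entry of column k of L when column k is nonzero and 0 otherwise. Then there exists exactly one permutation σ of Fin n such that L = P_σ · D and, for every index j, the orbit of j under σ contains at most one index k with D_{k k} = 0. -/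
section aux

attribute [local instance] Classical.propDecidable

variable {n : ℕ} {L : Matrix (Fin n) (Fin n) ℂ}

/-- The forced row map: for a nonzero column `k`, the row containing its nonzero entry. -/
noncomputable def Fm (L : Matrix (Fin n) (Fin n) ℂ) (k : Fin n) : Fin n :=
  if h : ∃ j, L j k ≠ 0 then h.choose else k

lemma Fm_spec {k : Fin n} (h : ∃ j, L j k ≠ 0) : L (Fm L k) k ≠ 0 := by
  rw [Fm, dif_pos h]; exact h.choose_spec

lemma Fm_inj (hL : IsGPM L) {k k' : Fin n} (h : ∃ j, L j k ≠ 0)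
    (h' : ∃ j, L j k' ≠ 0) (he : Fm L k = Fm L k') : k = k' :=
  hL.1 (Fm L k) k k' (Fm_spec h) (he ▸ Fm_spec h')

lemma peel (hL : IsGPM L) (a b : Fin n) :
    ∀ i j, i ≤ j → (∀ p < i, ∃ jj, L jj ((Fm L)^[p] a) ≠ 0) →
      (∀ p < j, ∃ jj, L jj ((Fm L)^[p] b) ≠ 0) →
      (Fm L)^[i] a = (Fm L)^[j] b → a = (Fm L)^[j-i] b
  | 0, j, _, _, _, h => by simpa using h
  | (i+1), 0, hij, _, _, _ => by omega
  | (i+1), (j+1), hij, ha, hb, h => by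
      have h1 : (Fm L)^[i] a = (Fm L)^[j] b := by
        apply Fm_inj hL (ha i (lt_add_one i)) (hb j (lt_add_one j))
        rwa [Function.iterate_succ_apply', Function.iterate_succ_apply'] at h
      have := peel hL a b i j (by omega) (fun p hp => ha p (by omega))
        (fun p hp => hb p (by omega)) h1
      simpa [Nat.succ_sub_succ] using this

lemma exZ (hL : IsGPM L) {r : Fin n} (hr : ∀ k, L r k = 0) :
    ∃ m, ¬ ∃ j, L j ((Fm L)^[m] r) ≠ 0 := by
  by_contra hc
  push_neg at hc
  have key : ∀ i j : ℕ, i < j → (Fm L)^[i] r ≠ (Fm L)^[j] r := by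
    intro i j hij heq
    have hpe := peel hL r r i j hij.le (fun p _ => hc p) (fun p _ => hc p) heq
    obtain ⟨p, hp⟩ : ∃ p, j - i = p + 1 := ⟨j - i - 1, by omega⟩
    rw [hp, Function.iterate_succ_apply'] at hpe
    have := Fm_spec (hc p)
    rw [← hpe] at this
    exact this (hr _)
  obtain ⟨i, j, hne, heq⟩ :=
    Finite.exists_ne_map_eq_of_infinite (fun m : ℕ => (Fm L)^[m] r)
  rcases hne.lt_or_gt with h | h
  · exact key i j h heq
  · exact key j i h heq.symm

/-- The length of the forced chain out of a zero row `r`. -/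
noncomputable def mfind (hL : IsGPM L) {r : Fin n} (hr : ∀ k, L r k = 0) : ℕ :=
  Nat.find (exZ hL hr)

/-- Follow forced edges from a zero row `r` until hitting a zero column. -/
noncomputable def emap (hL : IsGPM L) {r : Fin n} (hr : ∀ k, L r k = 0) : Fin n :=
  (Fm L)^[mfind hL hr] r

lemma emap_zero (hL : IsGPM L) {r : Fin n} (hr : ∀ k, L r k = 0) :
    ∀ j, L j (emap hL hr) = 0 := by
  intro j
  by_contra hc
  rw [emap, mfind] at hc
  exact Nat.find_spec (exZ hL hr) ⟨j, hc⟩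

lemma emap_min (hL : IsGPM L) {r : Fin n} (hr : ∀ k, L r k = 0) :
    ∀ p < mfind hL hr, ∃ j, L j ((Fm L)^[p] r) ≠ 0 := by
  intro p hp
  rw [mfind] at hp
  by_contra hc
  exact Nat.find_min (exZ hL hr) hp hc

lemma emap_inj (hL : IsGPM L) {r r' : Fin n} (hr : ∀ k, L r k = 0) (hr' : ∀ k, L r' k = 0)
    (he : emap hL hr = emap hL hr') : r = r' := by
  have key : ∀ (a b : Fin n) (ha : ∀ k, L a k = 0) (hb : ∀ k, L b k = 0),
      mfind hL ha ≤ mfind hL hb →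
      emap hL ha = emap hL hb → a = b := by
    intro a b ha hb hle heq
    have hpe := peel hL a b _ _ hle (emap_min hL ha) (emap_min hL hb) heq
    rcases Nat.eq_zero_or_pos (mfind hL hb - mfind hL ha) with h0 | h0
    · rw [h0] at hpe; simpa using hpe
    · exfalso
      obtain ⟨p, hp⟩ : ∃ p, mfind hL hb - mfind hL ha = p + 1 :=
        ⟨mfind hL hb - mfind hL ha - 1, by omega⟩
      rw [hp, Function.iterate_succ_apply'] at hpe
      have hpb : ∃ j, L j ((Fm L)^[p] b) ≠ 0 := emap_min hL hb p (by omega)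
      have := Fm_spec hpb
      rw [← hpe] at this
      exact this (ha _)
  rcases le_total (mfind hL hr) (mfind hL hr') with hle | hle
  · exact key r r' hr hr' hle he
  · exact (key r' r hr' hr hle he.symm).symm

/-- The inverse of the desired permutation, as a plain function. -/
noncomputable def tau (hL : IsGPM L) (j : Fin n) : Fin n :=
  if h : ∃ k, L j k ≠ 0 then h.choose
  else emap hL (fun k => Classical.byContradiction (fun hk => h ⟨k, hk⟩))

lemma tau_spec1 (hL : IsGPM L) {j : Fin n} (h : ∃ k, L j k ≠ 0) :
    L j (tau hL j) ≠ 0 := by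
  rw [tau, dif_pos h]; exact h.choose_spec

lemma tau_spec2 (hL : IsGPM L) {j : Fin n} (h : ∀ k, L j k = 0) :
    tau hL j = emap hL h := by
  rw [tau, dif_neg (by push_neg; exact h)]

lemma tau_Fm (hL : IsGPM L) {k : Fin n} (h : ∃ j, L j k ≠ 0) :
    tau hL (Fm L k) = k :=
  hL.1 (Fm L k) _ _ (tau_spec1 hL ⟨k, Fm_spec h⟩) (Fm_spec h)

lemma tau_inj (hL : IsGPM L) : Function.Injective (tau hL) := by
  intro j j' he
  by_cases h : ∃ k, L j k ≠ 0 <;> by_cases h' : ∃ k, L j' k ≠ 0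
  · exact hL.2 j j' _ (tau_spec1 hL h) (he ▸ tau_spec1 hL h')
  · exfalso
    push_neg at h'
    have h2 := tau_spec2 hL h'
    have := tau_spec1 hL h
    rw [he, h2] at this
    exact this (emap_zero hL h' j)
  · exfalso
    push_neg at h
    have h2 := tau_spec2 hL h
    have := tau_spec1 hL h'
    rw [← he, h2] at this
    exact this (emap_zero hL h j')
  · push_neg at h h'
    rw [tau_spec2 hL h, tau_spec2 hL h'] at he
    exact emap_inj hL h h' he

lemma iter_lemma (hL : IsGPM L) (π : Equiv.Perm (Fin n))
    (hπ : ∀ c, (∃ j, L j c ≠ 0) → π c = Fm L c)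
    {k : Fin n} (hr : ∀ c, L (π k) c = 0) :
    ∀ i ≤ mfind hL hr, (π ^ (i+1)) k = (Fm L)^[i] (π k) := by
  intro i hi
  induction i with
  | zero => simp
  | succ i ih =>
    have h1 : (π ^ (i+1)) k = (Fm L)^[i] (π k) := ih (by omega)
    have hnz : ∃ j, L j ((Fm L)^[i] (π k)) ≠ 0 := emap_min hL hr i (by omega)
    have : (π ^ (i+1+1)) k = π ((π ^ (i+1)) k) := by
      rw [pow_succ']; rfl
    rw [this, h1, hπ _ hnz, Function.iterate_succ_apply']

end aux

theorem stmt2 (n : ℕ) (L : Matrix (Fin n) (Fin n) ℂ) (hL : IsGPM L)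
    (d : Fin n → ℂ)
    (hd1 : ∀ k j, L j k ≠ 0 → d k = L j k)
    (hd2 : ∀ k, (∀ j, L j k = 0) → d k = 0) :
    ∃! σ : Equiv.Perm (Fin n),
      L = permMat n σ * Matrix.diagonal d ∧
      ∀ j k k' : Fin n, σ.SameCycle j k → σ.SameCycle j k' →
        d k = 0 → d k' = 0 → k = k' := by
  classical
  have hbij : Function.Bijective (tau hL) :=
    Finite.injective_iff_bijective.mp (tau_inj hL)
  set σ : Equiv.Perm (Fin n) := (Equiv.ofBijective (tau hL) hbij).symm with hσdef
  have hστ : ∀ j k : Fin n, σ k = j ↔ tau hL j = k := by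
    intro j k
    constructor
    · intro h
      rw [← h]
      exact (Equiv.ofBijective (tau hL) hbij).apply_symm_apply k
    · intro h
      rw [← h]
      exact (Equiv.ofBijective (tau hL) hbij).symm_apply_apply j
  have hσF : ∀ k : Fin n, (∃ j, L j k ≠ 0) → σ k = Fm L k :=
    fun k h => (hστ _ _).mpr (tau_Fm hL h)
  have hdz : ∀ k : Fin n, (∃ j, L j k ≠ 0) → d k ≠ 0 := by
    intro k ⟨j, hj⟩
    rw [hd1 k j hj]; exact hj
  have hmat : ∀ (π : Equiv.Perm (Fin n)),
      (L = permMat n π * Matrix.diagonal d) ↔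
        ∀ j k, L j k = if j = π k then d k else 0 := by
    intro π
    constructor
    · intro h j k
      rw [h]
      simp [permMat, Matrix.mul_diagonal, ite_mul]
    · intro h
      ext j k
      rw [h]
      simp [permMat, Matrix.mul_diagonal, ite_mul]
  -- key fact: for a zero column k, σ k is a zero row whose chain ends at k
  have hcycstruct : ∀ (k : Fin n), (∀ j, L j k = 0) →
      ∃ (hr : ∀ c, L (σ k) c = 0), emap hL hr = k := by
    intro k hk
    have htk : tau hL (σ k) = k := (hστ (σ k) k).mp rfl
    have hr : ∀ c, L (σ k) c = 0 := by
      intro c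
      by_contra hc
      have := tau_spec1 hL ⟨c, hc⟩
      rw [htk] at this
      exact this (hk _)
    exact ⟨hr, by rw [← tau_spec2 hL hr, htk]⟩
  -- the cycle condition, proved for a general permutation that agrees with the
  -- forced structure (used for σ via hcycstruct, and reused below)
  have cyccond : ∀ (π : Equiv.Perm (Fin n)),
      (∀ c, (∃ j, L j c ≠ 0) → π c = Fm L c) →
      ∀ (k : Fin n) (hr : ∀ c, L (π k) c = 0), emap hL hr = k →
      ∀ k' : Fin n, π.SameCycle k k' → d k' = 0 → k' = k := by
    intro π hπ k hr hek k' hsc hk'0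
    set m := mfind hL hr with hm
    have hiter := iter_lemma hL π hπ hr
    have hper : (π ^ (m+1)) k = k := by
      rw [hiter m le_rfl]; exact hek
    have hq : ∀ q, (π ^ ((m+1)*q)) k = k := by
      intro q
      induction q with
      | zero => simp
      | succ q ih =>
        rw [Nat.mul_succ, pow_add, Equiv.Perm.mul_apply, hper, ih]
    obtain ⟨i, _, hi⟩ := hsc.exists_pow_eq'
    have h2 : (π ^ (i % (m+1) + (m+1) * (i / (m+1)))) k = k' := by
      rw [Nat.mod_add_div]; exact hi
    rw [pow_add, Equiv.Perm.mul_apply, hq] at h2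
    -- h2 : (π ^ (i % (m+1))) k = k'
    rcases Nat.eq_zero_or_pos (i % (m+1)) with h0 | h0
    · rw [h0] at h2; simpa using h2.symm
    · exfalso
      obtain ⟨t, ht⟩ : ∃ t, i % (m+1) = t + 1 := ⟨i % (m+1) - 1, by omega⟩
      have htm : t < m := by
        have := Nat.mod_lt i (y := m+1) (by omega)
        omega
      rw [ht, hiter t htm.le] at h2
      have := hdz _ (emap_min hL hr t htm)
      rw [h2] at this
      exact this hk'0
  refine ⟨σ, ⟨?_, ?_⟩, ?_⟩
  · -- L = permMat n σ * diagonal d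
    apply (hmat σ).mpr
    intro j k
    by_cases hk : ∃ j0, L j0 k ≠ 0
    · by_cases hj : j = σ k
      · rw [if_pos hj, hj, hσF k hk]
        exact (hd1 k _ (Fm_spec hk)).symm
      · rw [if_neg hj]
        by_contra hne
        exact hj ((hL.2 j _ k hne (Fm_spec hk)).trans (hσF k hk).symm)
    · push_neg at hk
      rw [hk j, hd2 k hk]
      simp
  · -- cycle condition for σ
    intro j k k' h1 h2 hk0 hk'0
    have hk : ∀ j, L j k = 0 := by
      by_contra hc
      push_neg at hc
      obtain ⟨j0, hj0⟩ := hc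
      exact hdz k ⟨j0, hj0⟩ hk0
    obtain ⟨hr, hek⟩ := hcycstruct k hk
    exact (cyccond σ hσF k hr hek k' (h1.symm.trans h2) hk'0).symm
  · -- uniqueness
    intro π ⟨hmatπ, hcycπ⟩
    have hent : ∀ j k, L j k = if j = π k then d k else 0 := (hmat π).mp hmatπ
    have hπF : ∀ c, (∃ j, L j c ≠ 0) → π c = Fm L c := by
      intro c hc
      have hs := Fm_spec hc
      rw [hent] at hs
      by_cases h : Fm L c = π c
      · exact h.symm
      · rw [if_neg h] at hs; exact absurd rfl hs
    apply Equiv.ext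
    intro k
    by_cases hk : ∃ j, L j k ≠ 0
    · rw [hπF k hk, hσF k hk]
    · push_neg at hk
      have hr : ∀ c, L (π k) c = 0 := by
        intro c
        by_contra hc
        by_cases he : π k = π c
        · have : c = k := π.injective he.symm
          rw [this] at hc
          exact hc (hk _)
        · rw [hent, if_neg he] at hc
          exact hc rfl
      set m := mfind hL hr with hm
      set k0 := emap hL hr with hk0
      have hiter := iter_lemma hL π hπF hr m le_rfl
      -- hiter : (π ^ (m+1)) k = (Fm L)^[m] (π k) = k0
      have hd0 : d k0 = 0 := hd2 _ (emap_zero hL hr)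
      have hsc : π.SameCycle k k0 := by
        refine ⟨((m+1 : ℕ) : ℤ), ?_⟩
        rw [zpow_natCast, hiter]
        rfl
      have hkk0 : k = k0 :=
        hcycπ k k k0 (Equiv.Perm.SameCycle.refl π k) hsc (hd2 k hk) hd0
      have : tau hL (π k) = k := by
        rw [tau_spec2 hL hr, ← hk0, ← hkk0]
      rw [(hστ (π k) k).mpr this]
end

section
/- Let L = P_σ · D be an n×n complex matrix with σ a permutation of Fin n and D diagonal, and for j ∈ Fin n let E_j denote the matrix with a single 1 in position (j,j) and zeros elsewhere. Then L · E_j · Lᴴ − (1/2)·(Lᴴ · L · E_j + E_j · Lᴴ · L) = |D_{j j}|² · (E_{σ(j)} − E_j). In particular, the rank-one diagonal projectors E_j are stationary eigenprojectors of the Lindblad dissipator generated by GPM Lindblad operators. -/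
/-!
`L` sends `e_j` to `d_j e_{σ j}`, so `L E_j Lᴴ = (L E_j)(L E_j)ᴴ = |d_j|² E_{σ j}`. Since the
permutation matrix is unitary, `Lᴴ L = |D|²` is diagonal, so both anticommutator terms equal
`|d_j|² E_j`.
-/

open Matrix

namespace Matrix

variable {n : Type*} [Fintype n] [DecidableEq n] {α : Type*} [NonUnitalNonAssocSemiring α]

theorem diagonal_mul_single (w : n → α) (i j : n) (c : α) :
    diagonal w * single i j c = single i j (w i * c) := by
  ext a b
  rcases eq_or_ne i a with rfl | h <;> simp [single, diagonal_mul, *]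

theorem single_mul_diagonal (w : n → α) (i j : n) (c : α) :
    single i j c * diagonal w = single i j (c * w j) := by
  ext a b
  rcases eq_or_ne j b with rfl | h <;> simp [single, mul_diagonal, *]

end Matrix

variable {n : ℕ}

theorem permMat_mul_single (σ : Equiv.Perm (Fin n)) (i k : Fin n) (c : ℂ) :
    permMat n σ * single i k c = single (σ i) k c := by
  ext a b
  simp only [permMat, single, mul_apply, of_apply, ite_and]
  simp [eq_comm]
  split_ifs <;> rfl

theorem conjTranspose_permMat_mul_self (σ : Equiv.Perm (Fin n)) :
    (permMat n σ)ᴴ * permMat n σ = 1 := by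
  ext a b
  simp [permMat, mul_apply, one_apply, apply_ite (starRingEnd ℂ), eq_comm]

theorem conjTranspose_mul_self_permMat_mul_diagonal (σ : Equiv.Perm (Fin n)) (d : Fin n → ℂ) :
    (permMat n σ * diagonal d)ᴴ * (permMat n σ * diagonal d) =
      diagonal fun k => (‖d k‖ : ℂ) ^ 2 := by
  rw [conjTranspose_mul, diagonal_conjTranspose, Matrix.mul_assoc,
    ← Matrix.mul_assoc _ (permMat n σ), conjTranspose_permMat_mul_self, Matrix.one_mul,
    diagonal_mul_diagonal]
  congr 1
  ext k
  exact Complex.conj_mul' (d k)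

theorem stmt3 (n : ℕ) (σ : Equiv.Perm (Fin n)) (d : Fin n → ℂ)
    (L : Matrix (Fin n) (Fin n) ℂ) (hL : L = permMat n σ * Matrix.diagonal d) (j : Fin n) :
    L * Matrix.single j j (1 : ℂ) * Lᴴ -
      (1 / 2 : ℂ) • (Lᴴ * L * Matrix.single j j (1 : ℂ) +
        Matrix.single j j (1 : ℂ) * (Lᴴ * L)) =
    ((‖d j‖) ^ 2 : ℂ) •
      (Matrix.single (σ j) (σ j) (1 : ℂ) - Matrix.single j j (1 : ℂ)) := by
  have hcol : L * single j j 1 = single (σ j) j (d j) := by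
    rw [hL, Matrix.mul_assoc, diagonal_mul_single, mul_one, permMat_mul_single]
  have hjump : L * single j j 1 * Lᴴ = single (σ j) (σ j) ((‖d j‖ : ℂ) ^ 2) := by
    calc L * single j j 1 * Lᴴ = L * (single j j 1 * single j j 1) * Lᴴ := by
          rw [single_mul_single_same, mul_one]
      _ = L * single j j 1 * (L * single j j 1)ᴴ := by
          simp only [conjTranspose_mul, conjTranspose_single, star_one, Matrix.mul_assoc]
      _ = _ := by
          rw [hcol, conjTranspose_single, single_mul_single_same, Complex.star_def,
            Complex.mul_conj']
  have hgram : Lᴴ * L = diagonal fun k => (‖d k‖ : ℂ) ^ 2 :=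
    hL ▸ conjTranspose_mul_self_permMat_mul_diagonal σ d
  rw [hjump, hgram, diagonal_mul_single, single_mul_diagonal, mul_one, one_mul,
    ← two_smul ℂ (single j j _), smul_smul, smul_sub, smul_single, smul_single]
  norm_num
end

section
/- Let Ω be an n×n real matrix with Ω_{j k} ≥ 0 for all j ≠ k and all column sums zero. Then the rank of Ω equals n − n_B, where n_B is the number of basins of the digraph G_Ω; equivalently, the kernel of the linear map ℝⁿ → ℝⁿ determined by Ω has dimension n_B. -/
open scoped Classical
open Matrix

/-- Edge of the digraph `G_Ω`: for `k ≠ j`, there is an edge from `k` to `j` iff `Ω j k ≠ 0`. -/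
def edgeRel {n : ℕ} (Ω : Matrix (Fin n) (Fin n) ℝ) (k j : Fin n) : Prop :=
  k ≠ j ∧ Ω j k ≠ 0

/-- Reachability in `G_Ω`: the reflexive-transitive closure of the edge relation. -/
def reaches {n : ℕ} (Ω : Matrix (Fin n) (Fin n) ℝ) : Fin n → Fin n → Prop :=
  Relation.ReflTransGen (edgeRel Ω)

/-- `S` is a strongly connected component of `G_Ω`: it is nonempty, and it is the
mutual-reachability equivalence class of each of its elements. -/
def IsSCC {n : ℕ} (Ω : Matrix (Fin n) (Fin n) ℝ) (S : Set (Fin n)) : Prop :=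
  S.Nonempty ∧ ∀ u ∈ S, ∀ v : Fin n, (v ∈ S ↔ (reaches Ω u v ∧ reaches Ω v u))

/-- A basin: a strongly connected component with no outgoing edges. -/
def IsBasin {n : ℕ} (Ω : Matrix (Fin n) (Fin n) ℝ) (S : Set (Fin n)) : Prop :=
  IsSCC Ω S ∧ ∀ j ∈ S, ∀ k : Fin n, k ∉ S → Ω k j = 0

/- ### Auxiliary lemmas -/

/-- From every vertex one can reach a vertex lying in some basin. -/
lemma exists_basin_reachable {n : ℕ} (Ω : Matrix (Fin n) (Fin n) ℝ) (u : Fin n) :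
    ∃ S : Set (Fin n), ∃ v : Fin n, IsBasin Ω S ∧ v ∈ S ∧ reaches Ω u v := by
  classical
  let R : Fin n → Finset (Fin n) := fun w => Finset.univ.filter (fun x => reaches Ω w x)
  have hmemR : ∀ w x, x ∈ R w ↔ reaches Ω w x := by
    intro w x; simp [R]
  obtain ⟨v, hv, hvmin⟩ := Finset.exists_min_image (R u) (fun w => (R w).card)
    ⟨u, (hmemR u u).2 Relation.ReflTransGen.refl⟩
  have huv : reaches Ω u v := (hmemR u v).1 hv
  have hback : ∀ w, reaches Ω v w → reaches Ω w v := by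
    intro w hw
    have hsub : R w ⊆ R v := by
      intro x hx; exact (hmemR v x).2 (hw.trans ((hmemR w x).1 hx))
    have hwRu : w ∈ R u := (hmemR u w).2 (huv.trans hw)
    have hcard : (R v).card ≤ (R w).card := hvmin w hwRu
    have : R w = R v := Finset.eq_of_subset_of_card_le hsub hcard
    have : v ∈ R w := this ▸ ((hmemR v v).2 Relation.ReflTransGen.refl)
    exact (hmemR w v).1 this
  refine ⟨{x | reaches Ω v x ∧ reaches Ω x v}, v, ⟨⟨⟨v, Relation.ReflTransGen.refl,
    Relation.ReflTransGen.refl⟩, ?_⟩, ?_⟩, ⟨Relation.ReflTransGen.refl, Relation.ReflTransGen.refl⟩, huv⟩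
  · intro a ha b
    constructor
    · rintro ⟨h1, h2⟩
      exact ⟨ha.2.trans h1, h2.trans ha.1⟩
    · rintro ⟨h1, h2⟩
      exact ⟨ha.1.trans h1, h2.trans ha.2⟩
  · intro j hj k hk
    by_contra hne
    have hjk : j ≠ k := by rintro rfl; exact hk hj
    have : edgeRel Ω j k := ⟨hjk, hne⟩
    have : reaches Ω v k := hj.1.trans (Relation.ReflTransGen.single this)
    exact hk ⟨this, hback k this⟩

/-- Two basins sharing a point coincide. -/
lemma basin_eq_of_mem {n : ℕ} {Ω : Matrix (Fin n) (Fin n) ℝ} {S T : Set (Fin n)}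
    (hS : IsBasin Ω S) (hT : IsBasin Ω T) {v : Fin n} (hvS : v ∈ S) (hvT : v ∈ T) :
    S = T := by
  ext w
  rw [hS.1.2 v hvS w, hT.1.2 v hvT w]

/-- Maximum principle, single step: a harmonic function attaining its maximum at `b`
has the same value at every out-neighbour of `b`. -/
lemma max_step {n : ℕ} (Ω : Matrix (Fin n) (Fin n) ℝ)
    (hoff : ∀ j k : Fin n, j ≠ k → 0 ≤ Ω j k)
    (hcol : ∀ k : Fin n, ∑ j, Ω j k = 0) (y : Fin n → ℝ)
    (hy : ∀ k, ∑ j, Ω j k * y j = 0) (b c : Fin n)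
    (hmax : ∀ j, y j ≤ y b) (hbc : b ≠ c) (hΩ : Ω c b ≠ 0) : y c = y b := by
  have h0 : ∑ j, Ω j b * (y j - y b) = 0 := by
    have := hy b
    have h2 : (∑ j, Ω j b) * y b = 0 := by rw [hcol b]; ring
    calc ∑ j, Ω j b * (y j - y b) = (∑ j, Ω j b * y j) - (∑ j, Ω j b) * y b := by
          simp [mul_sub, Finset.sum_sub_distrib, Finset.sum_mul]
      _ = 0 := by rw [this, h2]; ring
  have hnp : ∀ j ∈ Finset.univ, Ω j b * (y j - y b) ≤ 0 := by
    intro j _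
    rcases eq_or_ne j b with rfl | hne
    · simp
    · exact mul_nonpos_of_nonneg_of_nonpos (hoff j b hne) (by linarith [hmax j])
  have := (Finset.sum_eq_zero_iff_of_nonpos hnp).1 h0 c (Finset.mem_univ c)
  rcases mul_eq_zero.1 this with h | h
  · exact absurd h hΩ
  · linarith

/-- A harmonic function attaining its maximum at `b` is constant on everything
reachable from `b`. -/
lemma reach_const {n : ℕ} (Ω : Matrix (Fin n) (Fin n) ℝ)
    (hoff : ∀ j k : Fin n, j ≠ k → 0 ≤ Ω j k)
    (hcol : ∀ k : Fin n, ∑ j, Ω j k = 0) (y : Fin n → ℝ)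
    (hy : ∀ k, ∑ j, Ω j k * y j = 0) (b c : Fin n)
    (hmax : ∀ j, y j ≤ y b) (hr : reaches Ω b c) :
    y c = y b := by
  induction hr with
  | refl => rfl
  | tail _ he ih =>
    rename_i w c _
    have hmax' : ∀ j, y j ≤ y w := fun j => ih ▸ hmax j
    rw [← ih]
    exact max_step Ω hoff hcol y hy w c hmax' he.1 he.2

/-- A harmonic function vanishing somewhere on each basin is nonpositive. -/
lemma harmonic_nonpos {n : ℕ} (Ω : Matrix (Fin n) (Fin n) ℝ) (hn : 0 < n)
    (hoff : ∀ j k : Fin n, j ≠ k → 0 ≤ Ω j k)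
    (hcol : ∀ k : Fin n, ∑ j, Ω j k = 0) (y : Fin n → ℝ)
    (hy : ∀ k, ∑ j, Ω j k * y j = 0)
    (hz : ∀ S : Set (Fin n), IsBasin Ω S → ∃ v ∈ S, y v = 0) :
    ∀ j, y j ≤ 0 := by
  classical
  have : Nonempty (Fin n) := ⟨⟨0, hn⟩⟩
  obtain ⟨b, -, hb⟩ := Finset.exists_max_image Finset.univ y Finset.univ_nonempty
  have hmax : ∀ j, y j ≤ y b := fun j => hb j (Finset.mem_univ j)
  obtain ⟨S, v', hbasin, hv'S, hreach⟩ := exists_basin_reachable Ω b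
  have hv' : y v' = y b := reach_const Ω hoff hcol y hy b v' hmax hreach
  obtain ⟨v, hvS, hv0⟩ := hz S hbasin
  have hrv : reaches Ω v' v := ((hbasin.1.2 v' hv'S v).1 hvS).1
  have hmax' : ∀ j, y j ≤ y v' := fun j => hv' ▸ hmax j
  have : y v = y v' := reach_const Ω hoff hcol y hy v' v hmax' hrv
  intro j
  have : y b = 0 := by rw [← hv', ← this, hv0]
  linarith [hmax j]

/-- A harmonic function vanishing somewhere on each basin is zero. -/
lemma harmonicFun_eq_zero {n : ℕ} (Ω : Matrix (Fin n) (Fin n) ℝ) (hn : 0 < n)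
    (hoff : ∀ j k : Fin n, j ≠ k → 0 ≤ Ω j k)
    (hcol : ∀ k : Fin n, ∑ j, Ω j k = 0) (y : Fin n → ℝ)
    (hy : ∀ k, ∑ j, Ω j k * y j = 0)
    (hz : ∀ S : Set (Fin n), IsBasin Ω S → ∃ v ∈ S, y v = 0) :
    y = 0 := by
  have h1 := harmonic_nonpos Ω hn hoff hcol y hy hz
  have hy' : ∀ k, ∑ j, Ω j k * (-y) j = 0 := by
    intro k
    have := hy k
    simp only [Pi.neg_apply, mul_neg, Finset.sum_neg_distrib]
    linarith
  have hz' : ∀ S : Set (Fin n), IsBasin Ω S → ∃ v ∈ S, (-y) v = 0 := by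
    intro S hS
    obtain ⟨v, hv, h0⟩ := hz S hS
    exact ⟨v, hv, by simp [h0]⟩
  have h2 := harmonic_nonpos Ω hn hoff hcol (-y) hy' hz'
  funext j
  have := h2 j
  simp only [Pi.neg_apply, Pi.zero_apply] at *
  linarith [h1 j]

/-- Each basin carries a nonzero kernel vector of `Ω` supported on the basin. -/
lemma basin_kernel_vec {n : ℕ} (Ω : Matrix (Fin n) (Fin n) ℝ)
    (hcol : ∀ k : Fin n, ∑ j, Ω j k = 0) {S : Set (Fin n)} (hS : IsBasin Ω S) :
    ∃ x : Fin n → ℝ, Ω.mulVec x = 0 ∧ (∀ j, j ∉ S → x j = 0) ∧ x ≠ 0 := by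
  classical
  set M : Matrix ↥S ↥S ℝ := fun a b => Ω a b with hM
  have hScol : ∀ b : ↥S, ∑ a : ↥S, M a b = 0 := by
    intro b
    have h1 : ∑ a ∈ S.toFinset, Ω a (b : Fin n) = ∑ a : Fin n, Ω a b := by
      apply Finset.sum_subset (Finset.subset_univ _)
      intro a _ ha
      exact hS.2 b b.2 a (by simpa using ha)
    have h2 : ∑ a ∈ S.toFinset, Ω a (b : Fin n) = ∑ a : ↥S, M a b := by
      rw [← Finset.sum_subtype S.toFinset (fun x => Set.mem_toFinset) (fun a => Ω a b)]
    rw [← h2, h1, hcol]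
  have hne : Nonempty ↥S := ⟨⟨hS.1.1.choose, hS.1.1.choose_spec⟩⟩
  have hdet : M.det = 0 := by
    rw [← Matrix.det_transpose]
    rw [← Matrix.exists_mulVec_eq_zero_iff]
    refine ⟨1, one_ne_zero, ?_⟩
    ext b
    simp [Matrix.mulVec, dotProduct, Matrix.transpose, hScol b]
  obtain ⟨x', hx'ne, hx'⟩ := (Matrix.exists_mulVec_eq_zero_iff).2 hdet
  refine ⟨fun j => if h : j ∈ S then x' ⟨j, h⟩ else 0, ?_, ?_, ?_⟩
  · ext j
    have key : ∑ k : Fin n, Ω j k * (if h : k ∈ S then x' ⟨k, h⟩ else 0)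
        = ∑ k : ↥S, Ω j k * x' k := by
      calc ∑ k : Fin n, Ω j k * (if h : k ∈ S then x' ⟨k, h⟩ else 0)
          = ∑ k ∈ S.toFinset, Ω j k * (if h : k ∈ S then x' ⟨k, h⟩ else 0) := by
            refine (Finset.sum_subset (Finset.subset_univ _) ?_).symm
            intro k _ hk
            rw [dif_neg (by simpa using hk), mul_zero]
        _ = ∑ k : ↥S, Ω j k * (if h : (k : Fin n) ∈ S then x' ⟨k, h⟩ else 0) :=
            Finset.sum_subtype S.toFinset (fun x => Set.mem_toFinset) _
        _ = ∑ k : ↥S, Ω j k * x' k := by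
            apply Finset.sum_congr rfl
            intro k _
            rw [dif_pos k.2]
    rcases em (j ∈ S) with hj | hj
    · have : ∑ k : ↥S, Ω j k * x' k = M.mulVec x' ⟨j, hj⟩ := by
        simp [Matrix.mulVec, dotProduct, hM]
      simp only [Matrix.mulVec, dotProduct, Pi.zero_apply]
      rw [key, this, hx']
      rfl
    · simp only [Matrix.mulVec, dotProduct, Pi.zero_apply]
      rw [key]
      apply Finset.sum_eq_zero
      intro k _
      rw [hS.2 k k.2 j hj, zero_mul]
  · intro j hj; exact dif_neg hj
  · intro h
    apply hx'ne
    ext a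
    have := congrFun h a
    simpa [dif_pos a.2] using this

theorem stmt4 (n : ℕ) (Ω : Matrix (Fin n) (Fin n) ℝ)
    (hoff : ∀ j k : Fin n, j ≠ k → 0 ≤ Ω j k)
    (hcol : ∀ k : Fin n, ∑ j, Ω j k = 0) :
    Ω.rank = n - {S : Set (Fin n) | IsBasin Ω S}.ncard ∧
    Module.finrank ℝ (LinearMap.ker Ω.mulVecLin) =
      {S : Set (Fin n) | IsBasin Ω S}.ncard := by
  classical
  set B : Set (Set (Fin n)) := {S : Set (Fin n) | IsBasin Ω S} with hB
  -- trivial case n = 0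
  rcases Nat.eq_zero_or_pos n with rfl | hn
  · have hBempty : B = ∅ := by
      ext S
      simp only [hB, Set.mem_setOf_eq, Set.mem_empty_iff_false, iff_false]
      rintro ⟨⟨⟨v, -⟩, -⟩, -⟩
      exact v.elim0
    have h1 : Ω.rank = 0 := Nat.le_zero.1 (le_trans (Matrix.rank_le_card_height Ω) (by simp))
    have h2 : Module.finrank ℝ (LinearMap.ker Ω.mulVecLin) = 0 := by
      have := Submodule.finrank_le (LinearMap.ker Ω.mulVecLin)
      simp only [Module.finrank_fin_fun] at this
      omega
    simp [hBempty, h1, h2]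
  -- main case
  haveI : Fintype ↥B := Fintype.ofFinite _
  have hcardB : Fintype.card ↥B = B.ncard := by
    rw [← Nat.card_coe_set_eq, Nat.card_eq_fintype_card]
  -- basepoint of each basin
  have hBasin : ∀ S : ↥B, IsBasin Ω S.1 := fun S => S.2
  let pt : ↥B → Fin n := fun S => (hBasin S).1.1.choose
  have hpt : ∀ S : ↥B, pt S ∈ S.1 := fun S => (hBasin S).1.1.choose_spec
  -- Upper bound: finrank ker Ωᵀ ≤ ncard B
  have hupper : Module.finrank ℝ (LinearMap.ker Ωᵀ.mulVecLin) ≤ B.ncard := by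
    let φ : (Fin n → ℝ) →ₗ[ℝ] (↥B → ℝ) := LinearMap.pi (fun S => LinearMap.proj (pt S))
    let ψ := φ.comp (LinearMap.ker Ωᵀ.mulVecLin).subtype
    have hinj : Function.Injective ψ := by
      rw [← LinearMap.ker_eq_bot, LinearMap.ker_eq_bot']
      intro y hy0
      have hmem : Ωᵀ.mulVec y.1 = 0 := y.2
      have hy : ∀ k, ∑ j, Ω j k * (y.1) j = 0 := by
        intro k
        have := congrFun hmem k
        simpa [Matrix.mulVec, dotProduct, Matrix.transpose] using this
      have hz : ∀ S : Set (Fin n), IsBasin Ω S → ∃ v ∈ S, (y.1) v = 0 := by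
        intro S hS
        refine ⟨pt ⟨S, hS⟩, hpt ⟨S, hS⟩, ?_⟩
        have := congrFun hy0 ⟨S, hS⟩
        simpa [ψ, φ] using this
      have := harmonicFun_eq_zero Ω hn hoff hcol y.1 hy hz
      exact Subtype.ext this
    calc Module.finrank ℝ (LinearMap.ker Ωᵀ.mulVecLin)
        ≤ Module.finrank ℝ (↥B → ℝ) := LinearMap.finrank_le_finrank_of_injective hinj
      _ = Fintype.card ↥B := Module.finrank_pi ℝ
      _ = B.ncard := hcardB
  -- Lower bound: ncard B ≤ finrank ker Ω
  have hlower : B.ncard ≤ Module.finrank ℝ (LinearMap.ker Ω.mulVecLin) := by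
    choose x hx1 hx2 hx3 using fun S : ↥B => basin_kernel_vec Ω hcol (hBasin S)
    let v : ↥B → LinearMap.ker Ω.mulVecLin := fun S =>
      ⟨x S, by simpa [LinearMap.mem_ker, Matrix.mulVecLin_apply] using hx1 S⟩
    have hli : LinearIndependent ℝ v := by
      rw [Fintype.linearIndependent_iff]
      intro g hg S
      obtain ⟨j, hj⟩ : ∃ j, x S j ≠ 0 := by
        by_contra h
        push_neg at h
        exact hx3 S (funext h)
      have hjS : j ∈ S.1 := by
        by_contra hjS
        exact hj (hx2 S j hjS)
      have hsum : ∑ T : ↥B, g T * x T j = 0 := by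
        have := congrFun (congrArg (Subtype.val) hg) j
        simpa [v] using this
      have hzero : ∀ T : ↥B, T ≠ S → g T * x T j = 0 := by
        intro T hT
        have hjT : j ∉ T.1 := by
          intro hjT
          exact hT (Subtype.ext (basin_eq_of_mem (hBasin T) (hBasin S) hjT hjS))
        rw [hx2 T j hjT, mul_zero]
      have : g S * x S j = 0 := by
        rw [← hsum]
        exact (Finset.sum_eq_single S (fun T _ hT => hzero T hT)
          (fun h => absurd (Finset.mem_univ S) h)).symm
      rcases mul_eq_zero.1 this with h | h
      · exact h
      · exact absurd h hj
    calc B.ncard = Fintype.card ↥B := hcardB.symm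
      _ ≤ Module.finrank ℝ (LinearMap.ker Ω.mulVecLin) := hli.fintype_card_le_finrank
  -- rank–nullity bookkeeping
  have hrn : Ω.rank + Module.finrank ℝ (LinearMap.ker Ω.mulVecLin) = n := by
    have := LinearMap.finrank_range_add_finrank_ker Ω.mulVecLin
    simpa [Matrix.rank, Module.finrank_fin_fun] using this
  have hrnT : Ωᵀ.rank + Module.finrank ℝ (LinearMap.ker Ωᵀ.mulVecLin) = n := by
    have := LinearMap.finrank_range_add_finrank_ker Ωᵀ.mulVecLin
    simpa [Matrix.rank, Module.finrank_fin_fun] using this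
  have hT : Ωᵀ.rank = Ω.rank := Matrix.rank_transpose Ω
  have hker : Module.finrank ℝ (LinearMap.ker Ω.mulVecLin) = B.ncard := by omega
  exact ⟨by omega, hker⟩
end

section
/- Let Ω be an n×n real matrix with Ω_{j k} ≥ 0 for all j ≠ k and all column sums zero, and let S be a strongly connected component of the digraph G_Ω that is not a basin (i.e. there exist j ∈ S and k ∉ S with Ω_{k j} ≠ 0). Then the principal submatrix of Ω obtained by keeping the rows and columns indexed by S is invertible. -/
open scoped Classical

theorem stmt5 (n : ℕ) (Ω : Matrix (Fin n) (Fin n) ℝ)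
    (hoff : ∀ j k : Fin n, j ≠ k → 0 ≤ Ω j k)
    (hcol : ∀ k : Fin n, ∑ j, Ω j k = 0)
    (S : Finset (Fin n)) (hS : IsSCC Ω (S : Set (Fin n)))
    (hout : ∃ j ∈ S, ∃ k : Fin n, k ∉ S ∧ Ω k j ≠ 0) :
    IsUnit (Ω.submatrix (fun i : {x // x ∈ S} => (i : Fin n))
      (fun j : {x // x ∈ S} => (j : Fin n))) := by
  classical
  set A := Ω.submatrix (fun i : {x // x ∈ S} => (i : Fin n))
      (fun j : {x // x ∈ S} => (j : Fin n)) with hA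
  rw [Matrix.isUnit_iff_isUnit_det, isUnit_iff_ne_zero]
  intro hdet
  obtain ⟨y, hy0, hyA⟩ := Matrix.exists_vecMul_eq_zero_iff.2 hdet
  -- pick maximizer of |y|
  have hne : (Finset.univ : Finset {x // x ∈ S}).Nonempty := by
    obtain ⟨a, ha⟩ := hS.1
    exact ⟨⟨a, by simpa using ha⟩, Finset.mem_univ _⟩
  obtain ⟨j0, -, hj0max⟩ := Finset.exists_max_image Finset.univ (fun k => |y k|) hne
  set m : ℝ := |y j0| with hmdef
  have hm : 0 < m := by
    obtain ⟨i, hi⟩ := Function.ne_iff.1 hy0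
    exact lt_of_lt_of_le (abs_pos.2 hi) (hj0max i (Finset.mem_univ _))
  set ε : ℝ := if 0 ≤ y j0 then 1 else -1 with hε
  set x : Fin n → ℝ := fun v => if h : v ∈ S then ε * y ⟨v, h⟩ else 0 with hx
  have hxval : ∀ (v : Fin n) (h : v ∈ S), x v = ε * y ⟨v, h⟩ := by
    intro v h; simp [hx, h]
  have hxabs : ∀ k, |x k| ≤ m := by
    intro k
    by_cases h : k ∈ S
    · rw [hxval k h, abs_mul]
      have : |ε| = 1 := by rw [hε]; split <;> simp
      rw [this, one_mul]
      exact hj0max ⟨k, h⟩ (Finset.mem_univ _)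
    · simp [hx, h, hm.le]
  have hxle : ∀ k, x k ≤ m := fun k => (le_abs_self _).trans (hxabs k)
  have hxj0 : x (↑j0) = m := by
    rw [hxval _ j0.2, hε, hmdef]
    rcases le_or_gt 0 (y j0) with h | h
    · simp [h, abs_of_nonneg h]
    · simp [not_le.2 h, abs_of_neg h]
  -- the main linear equation for columns in S
  have heq : ∀ j ∈ S, ∑ k, x k * Ω k j = 0 := by
    intro j hj
    have h1 : ∑ k, x k * Ω k j = ∑ k ∈ S, x k * Ω k j := by
      refine (Finset.sum_subset (Finset.subset_univ S) ?_).symm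
      intro k _ hk
      simp [hx, hk]
    have h2 : ∑ k ∈ S, x k * Ω k j = ε * ∑ k : {x // x ∈ S}, y k * Ω (↑k) j := by
      rw [Finset.mul_sum, ← Finset.sum_coe_sort S (fun k => x k * Ω k j)]
      refine Finset.sum_congr rfl ?_
      intro k _
      rw [hxval _ k.2]
      ring
    have h3 : ∑ k : {x // x ∈ S}, y k * Ω (↑k) j = 0 := by
      have := congrFun hyA ⟨j, hj⟩
      simpa [Matrix.vecMul, dotProduct, hA, Matrix.submatrix] using this
    rw [h1, h2, h3, mul_zero]
  -- key propagation lemma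
  have key : ∀ j ∈ S, x j = m →
      (∀ k, k ∉ S → Ω k j = 0) ∧ (∀ k, k ∈ S → Ω k j ≠ 0 → k ≠ j → x k = m) := by
    intro j hj hxj
    have hsplit : x j * Ω j j + ∑ k ∈ Finset.univ.erase j, x k * Ω k j = 0 := by
      have h := heq j hj
      rwa [← Finset.add_sum_erase _ (fun k => x k * Ω k j) (Finset.mem_univ j)] at h
    have hcolsplit : Ω j j + ∑ k ∈ Finset.univ.erase j, Ω k j = 0 := by
      have h := hcol j
      rwa [← Finset.add_sum_erase _ (fun k => Ω k j) (Finset.mem_univ j)] at h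
    have hzero : ∑ k ∈ Finset.univ.erase j, (x k - m) * Ω k j = 0 := by
      have : ∑ k ∈ Finset.univ.erase j, (x k - m) * Ω k j =
          (∑ k ∈ Finset.univ.erase j, x k * Ω k j) -
            m * (∑ k ∈ Finset.univ.erase j, Ω k j) := by
        rw [Finset.mul_sum, ← Finset.sum_sub_distrib]
        refine Finset.sum_congr rfl fun k _ => by ring
      rw [this]
      have e1 : ∑ k ∈ Finset.univ.erase j, x k * Ω k j = -(x j * Ω j j) := by
        linarith [hsplit]
      have e2 : ∑ k ∈ Finset.univ.erase j, Ω k j = -(Ω j j) := by linarith [hcolsplit]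
      rw [e1, e2, hxj]; ring
    have hterm : ∀ k ∈ Finset.univ.erase j, (x k - m) * Ω k j = 0 := by
      have hnonpos : ∀ k ∈ Finset.univ.erase j, (x k - m) * Ω k j ≤ 0 := by
        intro k hk
        exact mul_nonpos_of_nonpos_of_nonneg (by linarith [hxle k])
          (hoff k j (Finset.ne_of_mem_erase hk))
      intro k hk
      exact (Finset.sum_eq_zero_iff_of_nonpos hnonpos).1 hzero k hk
    constructor
    · intro k hk
      have hkj : k ≠ j := fun h => hk (h ▸ hj)
      have := hterm k (Finset.mem_erase.2 ⟨hkj, Finset.mem_univ _⟩)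
      rcases mul_eq_zero.1 this with h | h
      · exfalso
        have : x k = 0 := by simp [hx, hk]
        rw [this] at h; linarith
      · exact h
    · intro k hkS hΩ hkj
      have := hterm k (Finset.mem_erase.2 ⟨hkj, Finset.mem_univ _⟩)
      rcases mul_eq_zero.1 this with h | h
      · linarith
      · exact absurd h hΩ
  -- now the graph argument
  obtain ⟨j₁, hj₁S, k₁, hk₁S, hΩ₁⟩ := hout
  have hj₁S' : j₁ ∈ (S : Set (Fin n)) := by simpa using hj₁S
  have hj0S' : (↑j0 : Fin n) ∈ (S : Set (Fin n)) := by exact j0.2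
  have hreach : reaches Ω (↑j0) j₁ := ((hS.2 _ hj0S' j₁).1 hj₁S').1
  have hback : reaches Ω j₁ (↑j0) := ((hS.2 _ hj0S' j₁).1 hj₁S').2
  have main : ∀ v, reaches Ω v j₁ →
      reaches Ω (↑j0) v → v ∈ S → x v = m → x j₁ = m := by
    intro v hv
    induction hv using Relation.ReflTransGen.head_induction_on with
    | refl => intro _ _ hxv; exact hxv
    | @head a c hac hc ih =>
      intro h0a haS hxa
      have h0c : reaches Ω (↑j0) c := h0a.tail hac
      have hcj0 : reaches Ω c (↑j0) := hc.trans hback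
      have hcS : c ∈ S := by
        have := (hS.2 _ hj0S' c).2 ⟨h0c, hcj0⟩
        simp at this; exact this
      have hxc : x c = m := (key a haS hxa).2 c hcS hac.2 hac.1.symm
      exact ih h0c hcS hxc
  have hxj₁ : x j₁ = m := main (↑j0) hreach Relation.ReflTransGen.refl j0.2 hxj0
  exact hΩ₁ ((key j₁ hj₁S hxj₁).1 k₁ hk₁S)
end

section
/- Let Ω be any n×n real matrix all of whose column sums are zero. For each j ∈ Fin n define v_j as the sum, over all parent functions p : Fin n → Fin n encoding rooted spanning trees of Fin n with root j, of the products ∏_{k ≠ j} Ω_{p(k), k}. Then Ω · v = 0, where v = (v_1, …, v_n). (Each row of Ω·v vanishes via an explicit bijection between the products w_{kj}·W(τ) over j-rooted trees τ and outgoing edges, and the products w_{jk}·W(τ') over trees τ' rooted at other vertices.) -/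
open scoped Classical

/-- The sum, over all parent functions `p` encoding rooted spanning trees of `Fin n`
with root `j` (i.e. `p j = j` and every vertex reaches `j` under iteration of `p`),
of the tree weights `∏_{k ≠ j} Ω (p k) k`. -/
noncomputable def treeSum {n : ℕ} (Ω : Matrix (Fin n) (Fin n) ℝ) (j : Fin n) : ℝ :=
  ∑ p ∈ Finset.univ.filter
      (fun p : Fin n → Fin n => p j = j ∧ ∀ v : Fin n, ∃ m : ℕ, p^[m] v = j),
    ∏ k ∈ Finset.univ.erase j, Ω (p k) k

section Aux

open Function Finset

variable {α : Type*} [DecidableEq α]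

lemma update_iterate_eq (f : α → α) (a b v : α) (m : ℕ)
    (h : ∀ t < m, f^[t] v ≠ a) : (Function.update f a b)^[m] v = f^[m] v := by
  induction m with
  | zero => rfl
  | succ m ih =>
    rw [Function.iterate_succ_apply', Function.iterate_succ_apply',
      ih (fun t ht => h t (ht.trans (Nat.lt_succ_self m))),
      Function.update_of_ne (h m (Nat.lt_succ_self m))]

lemma reach_update (f : α → α) (a b v : α)
    (h : ∃ m, f^[m] v = a) : ∃ m, (Function.update f a b)^[m] v = a := by
  refine ⟨Nat.find h, ?_⟩
  rw [update_iterate_eq f a b v _ (fun t ht => Nat.find_min h ht)]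
  exact Nat.find_spec h

/-- if a periodic point reaches a fixed point, it is that fixed point -/
lemma periodic_reach_fixed (f : α → α) (v a : α) (s m : ℕ) (hs : 0 < s)
    (hper : f^[s] v = v) (hm : f^[m] v = a) (ha : f a = a) : v = a := by
  have hper' : ∀ k, f^[s * k] v = v := by
    intro k
    induction k with
    | zero => simp
    | succ k ih => rw [Nat.mul_succ, Function.iterate_add_apply, hper, ih]
  have hge : m ≤ s * m := Nat.le_mul_of_pos_left m hs
  have : f^[s * m] v = a := by
    have := hper' m
    calc f^[s * m] v = f^[s * m - m] (f^[m] v) := by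
          rw [← Function.iterate_add_apply, Nat.sub_add_cancel hge]
        _ = f^[s * m - m] a := by rw [hm]
        _ = a := Function.iterate_fixed ha _
  rw [hper' m] at this; exact this

variable {n : ℕ}

noncomputable def Tset (j : Fin n) : Finset (Fin n → Fin n) :=
  Finset.univ.filter
    (fun p : Fin n → Fin n => p j = j ∧ ∀ v : Fin n, ∃ m : ℕ, p^[m] v = j)

noncomputable def Fset (i : Fin n) : Finset (Fin n → Fin n) :=
  Finset.univ.filter (fun q : Fin n → Fin n => ∀ v : Fin n, ∃ m : ℕ, q^[m] v = i)

noncomputable def backJ (i : Fin n) (q : Fin n → Fin n) : Fin n :=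
  if h : ∃ c, q^[c + 1] i = i then q^[Nat.find h] i else i

lemma Fset_cycle {i : Fin n} {q : Fin n → Fin n} (hq : q ∈ Fset i) :
    ∃ c, q^[c + 1] i = i := by
  rw [Fset, Finset.mem_filter] at hq
  obtain ⟨m, hm⟩ := hq.2 (q i)
  exact ⟨m, by rwa [Function.iterate_succ_apply]⟩

lemma q_backJ {i : Fin n} {q : Fin n → Fin n} (hq : q ∈ Fset i) :
    q (backJ i q) = i := by
  have h := Fset_cycle hq
  rw [backJ, dif_pos h]
  exact (Function.iterate_succ_apply' q (Nat.find h) i).symm.trans (Nat.find_spec h)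

lemma reach_backJ {i : Fin n} {q : Fin n → Fin n} (hq : q ∈ Fset i) (v : Fin n) :
    ∃ m, q^[m] v = backJ i q := by
  have h := Fset_cycle hq
  rw [Fset, Finset.mem_filter] at hq
  obtain ⟨m, hm⟩ := hq.2 v
  refine ⟨Nat.find h + m, ?_⟩
  rw [Function.iterate_add_apply, hm, backJ, dif_pos h]

end Aux

open Function Finset

lemma sum1 {n : ℕ} (Ω : Matrix (Fin n) (Fin n) ℝ) (i : Fin n) :
    ∑ j, Ω i j * treeSum Ω j = ∑ q ∈ Fset i, ∏ k, Ω (q k) k := by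
  have hT : ∀ j, Ω i j * treeSum Ω j
      = ∑ p ∈ Tset j, Ω i j * ∏ k ∈ Finset.univ.erase j, Ω (p k) k := by
    intro j; rw [treeSum, Finset.mul_sum]; rfl
  simp_rw [hT]
  rw [← Finset.sum_sigma (Finset.univ : Finset (Fin n)) Tset
    (fun x => Ω i x.1 * ∏ k ∈ Finset.univ.erase x.1, Ω (x.2 k) k)]
  refine Finset.sum_nbij' (fun x => Function.update x.2 x.1 i)
    (fun q => ⟨backJ i q, Function.update q (backJ i q) (backJ i q)⟩)
    ?_ ?_ ?_ ?_ ?_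
  · -- forward membership
    rintro ⟨j, p⟩ hx
    rw [Finset.mem_sigma, Tset, Finset.mem_filter] at hx
    obtain ⟨-, -, hpj, hreach⟩ := hx
    dsimp only at hpj hreach ⊢
    rw [Fset, Finset.mem_filter]
    refine ⟨Finset.mem_univ _, fun v => ?_⟩
    obtain ⟨m, hm⟩ := reach_update p j i v (hreach v)
    exact ⟨m + 1, by rw [Function.iterate_succ_apply', hm, Function.update_self]⟩
  · -- backward membership
    intro q hq
    rw [Finset.mem_sigma, Tset, Finset.mem_filter]
    refine ⟨Finset.mem_univ _, Finset.mem_univ _, Function.update_self _ _ _, fun v => ?_⟩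
    exact reach_update q (backJ i q) (backJ i q) v (reach_backJ hq v)
  · -- left inverse
    rintro ⟨j, p⟩ hx
    rw [Finset.mem_sigma, Tset, Finset.mem_filter] at hx
    obtain ⟨-, -, hpj, hreach⟩ := hx
    dsimp only at hpj hreach ⊢
    set q := Function.update p j i with hqdef
    have hq_at_j : q j = i := Function.update_self _ _ _
    -- m : minimal number of steps from i to j under p
    have hreach_i : ∃ m, p^[m] i = j := hreach i
    set m := Nat.find hreach_i with hmdef
    have hmspec : p^[m] i = j := Nat.find_spec hreach_i
    have hagree : ∀ t ≤ m, q^[t] i = p^[t] i := by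
      intro t ht
      exact update_iterate_eq p j i i t
        (fun s hs => Nat.find_min hreach_i (lt_of_lt_of_le hs ht))
    have hex : ∃ c, q^[c + 1] i = i := by
      refine ⟨m, ?_⟩
      rw [Function.iterate_succ_apply', hagree m le_rfl, hmspec, hq_at_j]
    have hfind : Nat.find hex = m := by
      rw [Nat.find_eq_iff]
      constructor
      · rw [Function.iterate_succ_apply', hagree m le_rfl, hmspec, hq_at_j]
      · intro s hs hcontra
        have hs1 : s + 1 ≤ m := hs
        have hps : p^[s + 1] i = i := (hagree (s + 1) hs1).symm.trans hcontra
        have hij : i = j := periodic_reach_fixed p i j (s + 1) m (Nat.succ_pos s)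
          hps hmspec hpj
        have hm0 : m ≤ 0 := Nat.find_le (show p^[0] i = j by simpa using hij)
        omega

    have hbj : backJ i q = j := by
      rw [backJ, dif_pos hex, hfind, hagree m le_rfl, hmspec]
    have hupd : Function.update q j j = p := by
      rw [hqdef, Function.update_idem]
      exact Function.update_eq_self_iff.mpr hpj.symm
    rw [hbj]
    exact Sigma.ext rfl (heq_of_eq hupd)
  · -- right inverse
    intro q hq
    dsimp only
    rw [Function.update_idem]
    exact Function.update_eq_self_iff.mpr (q_backJ hq).symm
  · -- values
    rintro ⟨j, p⟩ hx
    dsimp only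
    rw [← Finset.mul_prod_erase Finset.univ (fun k => Ω (Function.update p j i k) k)
      (Finset.mem_univ j), Function.update_self]
    congr 1
    refine Finset.prod_congr rfl (fun k hk => ?_)
    rw [Function.update_of_ne (Finset.ne_of_mem_erase hk)]

lemma sum2 {n : ℕ} (Ω : Matrix (Fin n) (Fin n) ℝ) (i : Fin n) :
    ∑ q ∈ Fset i, ∏ k, Ω (q k) k = (∑ j, Ω j i) * treeSum Ω i := by
  have : ∑ q ∈ Fset i, ∏ k, Ω (q k) k
      = ∑ x ∈ Finset.univ ×ˢ Tset i, Ω x.1 i * ∏ k ∈ Finset.univ.erase i, Ω (x.2 k) k := by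
    refine Finset.sum_nbij' (fun q => (q i, Function.update q i i))
      (fun x => Function.update x.2 i x.1) ?_ ?_ ?_ ?_ ?_
    · intro q hq
      rw [Finset.mem_product, Tset, Finset.mem_filter]
      rw [Fset, Finset.mem_filter] at hq
      exact ⟨Finset.mem_univ _, Finset.mem_univ _, Function.update_self _ _ _,
        fun v => reach_update q i i v (hq.2 v)⟩
    · rintro ⟨j, p⟩ hx
      rw [Finset.mem_product, Tset, Finset.mem_filter] at hx
      obtain ⟨-, -, hpi, hreach⟩ := hx
      rw [Fset, Finset.mem_filter]
      exact ⟨Finset.mem_univ _, fun v => reach_update p i j v (hreach v)⟩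
    · intro q hq
      dsimp only
      rw [Function.update_idem]
      exact Function.update_eq_self i q
    · rintro ⟨j, p⟩ hx
      rw [Finset.mem_product, Tset, Finset.mem_filter] at hx
      obtain ⟨-, -, hpi, hreach⟩ := hx
      dsimp only at hpi hreach ⊢
      refine Prod.ext (Function.update_self _ _ _) ?_
      dsimp only
      rw [Function.update_idem]
      exact Function.update_eq_self_iff.mpr hpi.symm
    · intro q hq
      dsimp only
      rw [← Finset.mul_prod_erase Finset.univ (fun k => Ω (q k) k) (Finset.mem_univ i)]
      congr 1
      refine Finset.prod_congr rfl (fun k hk => ?_)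
      rw [Function.update_of_ne (Finset.ne_of_mem_erase hk)]
  rw [this, Finset.sum_product, Finset.sum_mul]
  refine Finset.sum_congr rfl (fun j _ => ?_)
  rw [treeSum, Finset.mul_sum]; rfl

theorem stmt6 (n : ℕ) (Ω : Matrix (Fin n) (Fin n) ℝ)
    (hcol : ∀ k : Fin n, ∑ j, Ω j k = 0) :
    Ω.mulVec (fun j => treeSum Ω j) = 0 := by
  funext i
  have h1 := sum1 Ω i
  have h2 := sum2 Ω i
  have : Ω.mulVec (fun j => treeSum Ω j) i = ∑ j, Ω i j * treeSum Ω j := by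
    simp [Matrix.mulVec, dotProduct]
  rw [this, h1, h2, hcol i, zero_mul]
  rfl
end

section
/- Let Ω be an n×n real matrix with Ω_{j k} ≥ 0 for all j ≠ k and all column sums zero, with basins N_1, …, N_{n_B}. For each basin N_η and each j ∈ N_η let t_{η,j} be the sum of the weights of all rooted spanning trees of N_η with root j, and set T_η = ∑_{j ∈ N_η} t_{η,j}. Then T_η > 0 for every η, and, defining Λ_{η,∞} ∈ ℝⁿ by (Λ_{η,∞})_j = t_{η,j}/T_η for j ∈ N_η and 0 otherwise, the set {Λ ∈ ℝⁿ : Ω·Λ = 0, Λ_j ≥ 0 for all j, ∑_j Λ_j = 1} equals the set of convex combinations {∑_{η=1}^{n_B} s_η Λ_{η,∞} : s_η ≥ 0, ∑_η s_η = 1}. -/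
open scoped Classical

/-- A parent function encoding a rooted spanning tree of the subset `S` with root `r`:
`p r = r`, vertices outside `S` are fixed, `S` maps into `S`, and every vertex of `S`
iterates to `r`. -/
def IsTreeOn {n : ℕ} (S : Set (Fin n)) (r : Fin n) (p : Fin n → Fin n) : Prop :=
  p r = r ∧ (∀ v : Fin n, v ∉ S → p v = v) ∧ (∀ v ∈ S, p v ∈ S) ∧
    ∀ v ∈ S, ∃ m : ℕ, p^[m] v = r

/-- `t_{S,r}`: the total weight of all rooted spanning trees of `S` with root `r`. -/
noncomputable def treeOnSum {n : ℕ} (Ω : Matrix (Fin n) (Fin n) ℝ) (S : Set (Fin n))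
    (r : Fin n) : ℝ :=
  ∑ p ∈ Finset.univ.filter (fun p : Fin n → Fin n => IsTreeOn S r p),
    ∏ v ∈ Finset.univ.filter (fun v => v ∈ S ∧ v ≠ r), Ω (p v) v

/-- `T_S = ∑_{r ∈ S} t_{S,r}`. -/
noncomputable def basinTotal {n : ℕ} (Ω : Matrix (Fin n) (Fin n) ℝ) (S : Set (Fin n)) : ℝ :=
  ∑ r ∈ Finset.univ.filter (fun r : Fin n => r ∈ S), treeOnSum Ω S r

/-- The stationary vector `Λ_{S,∞}` of a basin `S`. -/
noncomputable def statVec {n : ℕ} (Ω : Matrix (Fin n) (Fin n) ℝ) (S : Set (Fin n)) :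
    Fin n → ℝ :=
  fun j => if j ∈ S then treeOnSum Ω S j / basinTotal Ω S else 0


/-!
A basin is strongly connected, so the shortest paths to any root form a spanning tree of positive
weight; hence `T_η > 0`. The vector `t_η` is stationary by the matrix-tree identity
`∑_{k ≠ j} Ω_{jk} t_k = (∑_{k ≠ j} Ω_{kj}) t_j` on `N_η`: both sides enumerate the functional graphs
on `N_η` whose cycle passes through `j`, obtained from a spanning tree by adding an edge into `j`
from its root `k`, resp. an edge out of `j` when `j` is the root.

Conversely, let `Λ ≥ 0` be stationary. No edge enters the set `U` of vertices outside all
basins, so summing `ΩΛ = 0` over `U` shows that no mass flows out of `U`; since every vertex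
reaches a basin and zeros of `Λ` propagate backwards along edges, `Λ = 0` on `U`. On a basin,
subtracting from `Λ` the largest multiple of `t_η` below it leaves a nonnegative stationary vector
with a zero, which then vanishes on the whole (strongly connected) basin.
-/

open Finset Function
open scoped Matrix

lemma Relation.ReflTransGen.exists_boundary {α : Type*} {R : α → α → Prop} {P : α → Prop}
    {a b : α} (h : Relation.ReflTransGen R a b) (ha : P a) (hb : ¬P b) :
    ∃ x y, Relation.ReflTransGen R a x ∧ P x ∧ R x y ∧ ¬P y := by
  induction h with
  | refl => exact absurd ha hb
  | @tail c d hac hcd ih =>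
    by_cases hc : P c
    · exact ⟨c, d, hac, hc, hcd, hb⟩
    · exact ih hc

section Iterate

variable {α : Type*} {f : α → α} {a b x : α}

lemma exists_iterate_eq_of_descent {S : Set α} {d : α → ℕ}
    (hf : ∀ v ∈ S, v ≠ a → f v ∈ S ∧ d (f v) < d v) : ∀ v ∈ S, ∃ m, f^[m] v = a := by
  intro v hv
  induction hd : d v using Nat.strong_induction_on generalizing v with
  | _ N ih =>
    by_cases hva : v = a
    · exact ⟨0, hva⟩
    · obtain ⟨hfv, hlt⟩ := hf v hv hva
      obtain ⟨m, hm⟩ := ih _ (hd ▸ hlt) _ hfv rfl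
      exact ⟨m + 1, hm⟩

lemma exists_iterate_update_eq_of_iterate_eq [DecidableEq α] {m : ℕ} (h : f^[m] x = a) :
    ∃ m', (update f a b)^[m'] x = a := by
  induction m generalizing x with
  | zero => exact ⟨0, h⟩
  | succ m ih =>
    by_cases hxa : x = a
    · exact ⟨0, hxa⟩
    · obtain ⟨m', hm'⟩ := ih (x := f x) h
      exact ⟨m' + 1, by rwa [iterate_succ_apply, update_of_ne hxa]⟩

lemma iterate_update_eq_of_forall_ne [DecidableEq α] {s : ℕ} (h : ∀ i < s, f^[i] x ≠ a) :
    (update f a b)^[s] x = f^[s] x := by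
  induction s with
  | zero => rfl
  | succ s ih =>
    rw [iterate_succ_apply', iterate_succ_apply', ih fun i hi => h i (by omega),
      update_of_ne (h s (by omega))]

noncomputable def cyclePred (f : α → α) (x : α) : α := f^[minimalPeriod f x - 1] x

lemma apply_cyclePred (hx : x ∈ periodicPts f) : f (cyclePred f x) = x := by
  rw [cyclePred, ← iterate_succ_apply' f, Nat.succ_eq_add_one,
    Nat.sub_add_cancel (minimalPeriod_pos_of_mem_periodicPts hx), iterate_minimalPeriod]

end Iterate

section Trees

variable {n : ℕ} {S : Set (Fin n)} {r c j k v : Fin n}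
  {p q : Fin n → Fin n}

lemma IsTreeOn.apply_ne_self (hp : IsTreeOn S r p) (hv : v ∈ S) (hvr : v ≠ r) : p v ≠ v := by
  intro h
  obtain ⟨m, hm⟩ := hp.2.2.2 v hv
  exact hvr (by rwa [iterate_fixed h] at hm)

lemma IsTreeOn.root_mem (hp : IsTreeOn S r p) (hv : v ∈ S) : r ∈ S := by
  obtain ⟨m, hm⟩ := hp.2.2.2 v hv
  exact hm ▸ Set.MapsTo.iterate (fun v hv => hp.2.2.1 v hv) m hv

/-- Parent functions on `S` all of whose orbits run into `j` while `j` itself moves, so that `j`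
lies on their unique cycle; adding to a rooted spanning tree of `S` an edge out of its root gives
one. -/
def IsUnicyclicAt (S : Set (Fin n)) (j : Fin n) (q : Fin n → Fin n) : Prop :=
  q j ≠ j ∧ (∀ v : Fin n, v ∉ S → q v = v) ∧ (∀ v ∈ S, q v ∈ S) ∧
    ∀ v ∈ S, ∃ m : ℕ, q^[m] v = j

lemma IsUnicyclicAt.mem (hq : IsUnicyclicAt S j q) : j ∈ S :=
  by_contra fun h => hq.1 (hq.2.1 j h)

lemma IsUnicyclicAt.mem_periodicPts (hq : IsUnicyclicAt S j q) : j ∈ periodicPts q := by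
  obtain ⟨m, hm⟩ := hq.2.2.2 (q j) (hq.2.2.1 j hq.mem)
  exact ⟨m + 1, m.succ_pos, hm⟩

lemma IsUnicyclicAt.apply (hq : IsUnicyclicAt S j q) : IsUnicyclicAt S (q j) q := by
  have hj := hq.mem
  obtain ⟨hqj, hout, hin, hreach⟩ := hq
  refine ⟨fun h => ?_, hout, hin, fun v hv => ?_⟩
  · obtain ⟨m, hm⟩ := hreach (q j) (hin j hj)
    exact hqj (by rwa [iterate_fixed h] at hm)
  · obtain ⟨m, hm⟩ := hreach v hv
    exact ⟨m + 1, by rw [iterate_succ_apply', hm]⟩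

lemma isTreeOn_update_self (hout : ∀ v, v ∉ S → q v = v) (hin : ∀ v ∈ S, q v ∈ S) (hr : r ∈ S)
    (hreach : ∀ v ∈ S, ∃ m, q^[m] v = r) : IsTreeOn S r (update q r r) := by
  refine ⟨update_self .., fun v hv => ?_, fun v hv => ?_, fun v hv => ?_⟩
  · rw [update_of_ne (ne_of_mem_of_not_mem hr hv).symm, hout v hv]
  · rcases eq_or_ne v r with rfl | hvr
    · rwa [update_self]
    · rw [update_of_ne hvr]; exact hin v hv
  · obtain ⟨m, hm⟩ := hreach v hv
    exact exists_iterate_update_eq_of_iterate_eq hm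

lemma IsTreeOn.isUnicyclicAt_update (hp : IsTreeOn S r p) (hc : c ∈ S) (hcr : c ≠ r) :
    IsUnicyclicAt S r (update p r c) := by
  have hr := hp.root_mem hc
  refine ⟨by rwa [update_self], fun v hv => ?_, fun v hv => ?_, fun v hv => ?_⟩
  · rw [update_of_ne (ne_of_mem_of_not_mem hr hv).symm, hp.2.1 v hv]
  · rcases eq_or_ne v r with rfl | hvr
    · rwa [update_self]
    · rw [update_of_ne hvr]; exact hp.2.2.1 v hv
  · obtain ⟨m, hm⟩ := hp.2.2.2 v hv
    exact exists_iterate_update_eq_of_iterate_eq hm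

lemma IsUnicyclicAt.cyclePred_mem (hq : IsUnicyclicAt S j q) : cyclePred q j ∈ S :=
  Set.MapsTo.iterate (fun v hv => hq.2.2.1 v hv) _ hq.mem

lemma IsUnicyclicAt.isTreeOn_update_cyclePred (hq : IsUnicyclicAt S j q) :
    IsTreeOn S (cyclePred q j) (update q (cyclePred q j) (cyclePred q j)) := by
  refine isTreeOn_update_self hq.2.1 hq.2.2.1 hq.cyclePred_mem fun v hv => ?_
  obtain ⟨m, hm⟩ := hq.2.2.2 v hv
  exact ⟨minimalPeriod q j - 1 + m, by rw [iterate_add_apply, hm, cyclePred]⟩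

/-- Closing the tree path from `j` to the root `k`, of length `s`, by the edge `k → j` creates a
cycle of length `s + 1`. -/
lemma IsTreeOn.cyclePred_update (hp : IsTreeOn S k p) (hj : j ∈ S) (hjk : j ≠ k) :
    cyclePred (update p k j) j = k := by
  set q := update p k j
  have hex := hp.2.2.2 j hj
  set s := Nat.find hex
  have hagree : ∀ i ≤ s, q^[i] j = p^[i] j := fun i hi =>
    iterate_update_eq_of_forall_ne fun i' hi' => Nat.find_min hex (by omega)
  have hqs : q^[s] j = k := (hagree s le_rfl).trans (Nat.find_spec hex)
  have hper : IsPeriodicPt q (s + 1) j := by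
    rw [IsPeriodicPt, IsFixedPt, iterate_succ_apply', hqs]
    exact update_self k j p
  suffices hmp : minimalPeriod q j = s + 1 by rw [cyclePred, hmp, Nat.add_sub_cancel, hqs]
  refine le_antisymm (hper.minimalPeriod_le s.succ_pos) (Nat.succ_le_of_lt ?_)
  by_contra! hle
  -- an earlier return would make `j` periodic under `p`, but its `p`-orbit ends at the fixed root
  have hpj : IsPeriodicPt p (minimalPeriod q j) j :=
    (hagree _ hle).symm.trans (isPeriodicPt_minimalPeriod q j)
  have hkj := (hpj.mul_const s).eq
  rw [← Nat.sub_add_cancel (Nat.le_mul_of_pos_left s (hper.minimalPeriod_pos s.succ_pos)),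
    iterate_add_apply, Nat.find_spec hex, iterate_fixed hp.1] at hkj
  exact hjk hkj.symm

end Trees

section Weights

variable {n : ℕ} {Ω : Matrix (Fin n) (Fin n) ℝ} {S : Set (Fin n)} {r j : Fin n}

noncomputable def treeWeight (Ω : Matrix (Fin n) (Fin n) ℝ) (S : Set (Fin n)) (r : Fin n)
    (p : Fin n → Fin n) : ℝ :=
  ∏ v ∈ univ.filter (fun v => v ∈ S ∧ v ≠ r), Ω (p v) v

noncomputable def graphWeight (Ω : Matrix (Fin n) (Fin n) ℝ) (S : Set (Fin n))
    (q : Fin n → Fin n) : ℝ :=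
  ∏ v ∈ univ.filter (· ∈ S), Ω (q v) v

lemma treeOnSum_eq_sum_treeWeight :
    treeOnSum Ω S r = ∑ p ∈ univ.filter (IsTreeOn S r), treeWeight Ω S r p :=
  rfl

lemma filter_mem_and_ne (S : Set (Fin n)) (r : Fin n) :
    univ.filter (fun v => v ∈ S ∧ v ≠ r) = (univ.filter (· ∈ S)).erase r := by
  ext v
  simp [and_comm]

lemma graphWeight_update (hr : r ∈ S) (p : Fin n → Fin n) (c : Fin n) :
    graphWeight Ω S (update p r c) = Ω c r * treeWeight Ω S r p := by
  rw [graphWeight, ← mul_prod_erase _ _ (by simpa using hr), update_self, treeWeight,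
    filter_mem_and_ne]
  congr 1
  exact prod_congr rfl fun v hv => by rw [update_of_ne (ne_of_mem_erase hv)]

lemma sum_mul_treeOnSum_eq_sum_graphWeight (hj : j ∈ S) :
    ∑ k ∈ (univ.filter (· ∈ S)).erase j, Ω j k * treeOnSum Ω S k =
      ∑ q ∈ univ.filter (IsUnicyclicAt S j), graphWeight Ω S q := by
  simp_rw [treeOnSum_eq_sum_treeWeight, mul_sum]
  rw [sum_sigma']
  refine sum_bij' (fun x _ => update x.2 x.1 j)
    (fun q _ => ⟨cyclePred q j, update q (cyclePred q j) (cyclePred q j)⟩) ?_ ?_ ?_ ?_ ?_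
  · rintro ⟨k, p⟩ hkp
    simp only [mem_sigma, mem_erase, mem_filter, mem_univ, true_and] at hkp ⊢
    simpa using (hkp.2.isUnicyclicAt_update hj hkp.1.1.symm).apply
  · intro q hq
    simp only [mem_sigma, mem_erase, mem_filter, mem_univ, true_and] at hq ⊢
    refine ⟨⟨fun h => hq.1 ?_, hq.cyclePred_mem⟩, hq.isTreeOn_update_cyclePred⟩
    simpa [h] using apply_cyclePred hq.mem_periodicPts
  · rintro ⟨k, p⟩ hkp
    simp only [mem_sigma, mem_erase, mem_filter, mem_univ, true_and] at hkp
    rw [hkp.2.cyclePred_update hj hkp.1.1.symm, update_idem, update_eq_self_iff.2 hkp.2.1.symm]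
  · intro q hq
    simp only [mem_filter, mem_univ, true_and] at hq
    rw [update_idem, update_eq_self_iff, apply_cyclePred hq.mem_periodicPts]
  · rintro ⟨k, p⟩ hkp
    simp only [mem_sigma, mem_erase, mem_filter, mem_univ, true_and] at hkp
    exact (graphWeight_update hkp.1.2 p j).symm

lemma sum_mul_treeOnSum_self_eq_sum_graphWeight (hj : j ∈ S) :
    (∑ k ∈ (univ.filter (· ∈ S)).erase j, Ω k j) * treeOnSum Ω S j =
      ∑ q ∈ univ.filter (IsUnicyclicAt S j), graphWeight Ω S q := by
  simp_rw [sum_mul, treeOnSum_eq_sum_treeWeight, mul_sum]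
  rw [sum_sigma']
  refine sum_bij' (fun x _ => update x.2 j x.1) (fun q _ => ⟨q j, update q j j⟩) ?_ ?_ ?_ ?_ ?_
  · rintro ⟨k, p⟩ hkp
    simp only [mem_sigma, mem_erase, mem_filter, mem_univ, true_and] at hkp ⊢
    exact hkp.2.isUnicyclicAt_update hkp.1.2 hkp.1.1
  · intro q hq
    simp only [mem_sigma, mem_erase, mem_filter, mem_univ, true_and] at hq ⊢
    exact ⟨⟨hq.1, hq.2.2.1 j hq.mem⟩,
      isTreeOn_update_self hq.2.1 hq.2.2.1 hq.mem hq.2.2.2⟩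
  · rintro ⟨k, p⟩ hkp
    simp only [mem_sigma, mem_erase, mem_filter, mem_univ, true_and] at hkp
    rw [update_self, update_idem, update_eq_self_iff.2 hkp.2.1.symm]
  · intro q _
    rw [update_idem, update_eq_self]
  · rintro ⟨k, p⟩ _
    exact (graphWeight_update hj p k).symm

theorem sum_mul_treeOnSum_eq (hj : j ∈ S) :
    ∑ k ∈ (univ.filter (· ∈ S)).erase j, Ω j k * treeOnSum Ω S k =
      (∑ k ∈ (univ.filter (· ∈ S)).erase j, Ω k j) * treeOnSum Ω S j := by
  rw [sum_mul_treeOnSum_eq_sum_graphWeight hj, sum_mul_treeOnSum_self_eq_sum_graphWeight hj]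

end Weights

section Basin

variable {n : ℕ} {Ω : Matrix (Fin n) (Fin n) ℝ} {S S' : Set (Fin n)} {r j v w : Fin n}
  {p : Fin n → Fin n}

lemma IsBasin.mem_of_edgeRel (hB : IsBasin Ω S) (hv : v ∈ S) (h : edgeRel Ω v w) : w ∈ S :=
  by_contra fun hw => h.2 (hB.2 v hv w hw)

lemma IsBasin.eq_of_mem (hB : IsBasin Ω S) (hB' : IsBasin Ω S') (hv : v ∈ S) (hv' : v ∈ S') :
    S = S' := by
  ext w
  rw [hB.1.2 v hv w, hB'.1.2 v hv' w]

lemma exists_isBasin_reaches (Ω : Matrix (Fin n) (Fin n) ℝ) (v : Fin n) :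
    ∃ S, IsBasin Ω S ∧ ∃ u ∈ S, reaches Ω v u := by
  set R : Fin n → Finset (Fin n) := fun u => univ.filter (reaches Ω u)
  have hR : ∀ u w, w ∈ R u ↔ reaches Ω u w := by simp [R]
  -- a vertex reachable from `v` whose reachable set is smallest can only reach its own SCC
  obtain ⟨u, hu, hmin⟩ := exists_min_image (R v) (fun u => #(R u)) ⟨v, (hR v v).2 .refl⟩
  have hvu := (hR v u).1 hu
  have hback : ∀ w, reaches Ω u w → reaches Ω w u := fun w hw =>
    have hsub : R w ⊆ R u := fun x hx => (hR u x).2 (hw.trans ((hR w x).1 hx))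
    (hR w u).1 (eq_of_subset_of_card_le hsub (hmin w ((hR v w).2 (hvu.trans hw))) ▸
      (hR u u).2 .refl)
  refine ⟨{w | reaches Ω u w ∧ reaches Ω w u}, ⟨⟨⟨u, .refl, .refl⟩, ?_⟩, ?_⟩, u, ⟨.refl, .refl⟩,
    hvu⟩
  · rintro a ⟨hua, hau⟩ w
    exact ⟨fun ⟨h1, h2⟩ => ⟨hau.trans h1, h2.trans hua⟩,
      fun ⟨h1, h2⟩ => ⟨hua.trans h1, h2.trans hau⟩⟩
  · rintro a ⟨hua, -⟩ k hk
    by_contra hka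
    have hak : a ≠ k := fun h => hk (h ▸ ⟨hua, hback a hua⟩)
    have huk : reaches Ω u k := hua.tail ⟨hak, hka⟩
    exact hk ⟨huk, hback k huk⟩

def ReachesIn (Ω : Matrix (Fin n) (Fin n) ℝ) (r : Fin n) : ℕ → Fin n → Prop
  | 0, v => v = r
  | m + 1, v => ∃ w, edgeRel Ω v w ∧ ReachesIn Ω r m w

lemma exists_reachesIn_of_reaches (h : reaches Ω v r) : ∃ m, ReachesIn Ω r m v := by
  induction h using Relation.ReflTransGen.head_induction_on with
  | refl => exact ⟨0, rfl⟩
  | head hvw _ ih =>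
    obtain ⟨m, hm⟩ := ih
    exact ⟨m + 1, _, hvw, hm⟩

/-- A shortest-path tree: every vertex other than `r` points to a neighbour closer to `r`. -/
lemma IsBasin.exists_isTreeOn (hB : IsBasin Ω S) (hr : r ∈ S) :
    ∃ p, IsTreeOn S r p ∧ ∀ v ∈ S, v ≠ r → edgeRel Ω v (p v) := by
  have hreach : ∀ v, ∃ m, v ∈ S → ReachesIn Ω r m v := fun v => by
    by_cases hv : v ∈ S
    · obtain ⟨m, hm⟩ := exists_reachesIn_of_reaches ((hB.1.2 r hr v).1 hv).2
      exact ⟨m, fun _ => hm⟩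
    · exact ⟨0, fun h => absurd h hv⟩
  have hnext : ∀ v ∈ S, v ≠ r →
      ∃ w, edgeRel Ω v w ∧ w ∈ S ∧ Nat.find (hreach w) < Nat.find (hreach v) := by
    intro v hv hvr
    have hspec := Nat.find_spec (hreach v) hv
    obtain ⟨m, hm⟩ := Nat.exists_eq_succ_of_ne_zero (n := Nat.find (hreach v)) fun h0 =>
      hvr (by rwa [h0] at hspec)
    rw [hm] at hspec
    obtain ⟨w, hvw, hw⟩ := hspec
    exact ⟨w, hvw, hB.mem_of_edgeRel hv hvw, hm ▸ Nat.lt_succ_of_le (Nat.find_min' _ fun _ => hw)⟩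
  choose! next hnext using hnext
  have hin : ∀ v ∈ S, (if v ∈ S ∧ v ≠ r then next v else v) ∈ S := fun v hv => by
    split_ifs with h
    exacts [(hnext v h.1 h.2).2.1, hv]
  refine ⟨fun v => if v ∈ S ∧ v ≠ r then next v else v, ⟨by simp, fun v hv => by simp [hv], hin,
    exists_iterate_eq_of_descent (d := fun v => Nat.find (hreach v)) fun v hv hvr => ?_⟩,
    fun v hv hvr => by simpa [hv, hvr] using (hnext v hv hvr).1⟩
  simpa only [hv, hvr, ne_eq, not_false_eq_true, and_self, if_true] using (hnext v hv hvr).2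

lemma treeWeight_nonneg (hoff : ∀ j k : Fin n, j ≠ k → 0 ≤ Ω j k) (hp : IsTreeOn S r p) :
    0 ≤ treeWeight Ω S r p :=
  prod_nonneg fun _ hv =>
    hoff _ _ (hp.apply_ne_self (mem_filter.1 hv).2.1 (mem_filter.1 hv).2.2)

lemma treeOnSum_nonneg (hoff : ∀ j k : Fin n, j ≠ k → 0 ≤ Ω j k) : 0 ≤ treeOnSum Ω S r :=
  sum_nonneg fun _ hp => treeWeight_nonneg hoff (mem_filter.1 hp).2

lemma treeOnSum_pos (hoff : ∀ j k : Fin n, j ≠ k → 0 ≤ Ω j k) (hB : IsBasin Ω S) (hr : r ∈ S) :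
    0 < treeOnSum Ω S r := by
  obtain ⟨p, hp, hedge⟩ := hB.exists_isTreeOn hr
  refine sum_pos' (fun q hq => treeWeight_nonneg hoff (mem_filter.1 hq).2)
    ⟨p, mem_filter.2 ⟨mem_univ _, hp⟩, prod_pos fun v hv => ?_⟩
  obtain ⟨hvS, hvr⟩ := (mem_filter.1 hv).2
  obtain ⟨hne, hΩ⟩ := hedge v hvS hvr
  exact (hoff _ _ (Ne.symm hne)).lt_of_ne (Ne.symm hΩ)

lemma basinTotal_pos (hoff : ∀ j k : Fin n, j ≠ k → 0 ≤ Ω j k) (hB : IsBasin Ω S) :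
    0 < basinTotal Ω S := by
  obtain ⟨r, hr⟩ := hB.1.1
  exact sum_pos (fun i hi => treeOnSum_pos hoff hB (mem_filter.1 hi).2) ⟨r, by simpa using hr⟩

lemma mulVec_indicator_treeOnSum (hcol : ∀ k : Fin n, ∑ j, Ω j k = 0) (hB : IsBasin Ω S) :
    Ω *ᵥ S.indicator (treeOnSum Ω S) = 0 := by
  funext j
  simp only [Matrix.mulVec, dotProduct, Set.indicator_apply, mul_ite, mul_zero, ← sum_filter,
    Pi.zero_apply]
  by_cases hj : j ∈ S
  · have hcolS : ∑ k ∈ univ.filter (· ∈ S), Ω k j = 0 := by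
      rw [← hcol j]
      exact sum_subset (subset_univ _) fun k _ hk => hB.2 j hj k (by simpa using hk)
    have hjS : j ∈ univ.filter (· ∈ S) := by simpa using hj
    rw [← add_sum_erase _ _ hjS, sum_mul_treeOnSum_eq hj, ← add_mul,
      add_sum_erase _ (fun k => Ω k j) hjS, hcolS, zero_mul]
  · exact sum_eq_zero fun k hk => by rw [hB.2 k (mem_filter.1 hk).2 j hj, zero_mul]

end Basin

section StatVec

variable {n : ℕ} {Ω : Matrix (Fin n) (Fin n) ℝ} {S : Set (Fin n)}

lemma statVec_eq_smul_indicator :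
    statVec Ω S = (basinTotal Ω S)⁻¹ • S.indicator (treeOnSum Ω S) := by
  funext j
  by_cases hj : j ∈ S <;> simp [statVec, hj, div_eq_inv_mul]

lemma mulVec_statVec (hcol : ∀ k : Fin n, ∑ j, Ω j k = 0) (hB : IsBasin Ω S) :
    Ω *ᵥ statVec Ω S = 0 := by
  rw [statVec_eq_smul_indicator, Matrix.mulVec_smul, mulVec_indicator_treeOnSum hcol hB, smul_zero]

lemma statVec_nonneg (hoff : ∀ j k : Fin n, j ≠ k → 0 ≤ Ω j k) (hB : IsBasin Ω S) (j : Fin n) :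
    0 ≤ statVec Ω S j := by
  unfold statVec
  split_ifs
  exacts [div_nonneg (treeOnSum_nonneg hoff) (basinTotal_pos hoff hB).le, le_rfl]

lemma statVec_pos (hoff : ∀ j k : Fin n, j ≠ k → 0 ≤ Ω j k) (hB : IsBasin Ω S) {j : Fin n}
    (hj : j ∈ S) : 0 < statVec Ω S j := by
  rw [statVec, if_pos hj]
  exact div_pos (treeOnSum_pos hoff hB hj) (basinTotal_pos hoff hB)

lemma sum_statVec (hoff : ∀ j k : Fin n, j ≠ k → 0 ≤ Ω j k) (hB : IsBasin Ω S) :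
    ∑ j, statVec Ω S j = 1 := by
  rw [statVec_eq_smul_indicator]
  simp only [Pi.smul_apply, smul_eq_mul, ← mul_sum, Set.indicator_apply, ← sum_filter]
  exact inv_mul_cancel₀ (basinTotal_pos hoff hB).ne'

end StatVec

section Stationary

variable {n : ℕ} {Ω : Matrix (Fin n) (Fin n) ℝ} {S : Set (Fin n)} {x : Fin n → ℝ} {j k : Fin n}

lemma apply_eq_zero_of_reaches (hoff : ∀ j k : Fin n, j ≠ k → 0 ≤ Ω j k) (hx : Ω *ᵥ x = 0)
    (hnn : ∀ j, 0 ≤ x j) (h : reaches Ω k j) (hj : x j = 0) : x k = 0 := by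
  induction h using Relation.ReflTransGen.head_induction_on with
  | refl => exact hj
  | @head a b hab _ ih =>
    -- `(Ω x)_b = 0` is a sum of nonnegative terms once `x b = 0`
    have hterm : ∀ l ∈ univ, 0 ≤ Ω b l * x l := fun l _ => by
      rcases eq_or_ne l b with rfl | hlb
      · rw [ih, mul_zero]
      · exact mul_nonneg (hoff b l hlb.symm) (hnn l)
    have := (sum_eq_zero_iff_of_nonneg hterm).1 (congrFun hx b) a (mem_univ a)
    exact (mul_eq_zero.1 this).resolve_left hab.2

lemma mul_apply_eq_zero_of_no_inflow (hoff : ∀ j k : Fin n, j ≠ k → 0 ≤ Ω j k)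
    (hcol : ∀ k : Fin n, ∑ j, Ω j k = 0) (hx : Ω *ᵥ x = 0) (hnn : ∀ j, 0 ≤ x j)
    {U : Finset (Fin n)} (hU : ∀ j ∈ U, ∀ k ∉ U, Ω j k = 0) (hk : k ∈ U) (hj : j ∉ U) :
    Ω j k * x k = 0 := by
  have hin : ∑ k ∈ U, ∑ j ∈ U, Ω j k * x k = 0 := by
    have h : ∑ k, ∑ j ∈ U, Ω j k * x k = 0 := by
      rw [sum_comm]
      exact sum_eq_zero fun j _ => congrFun hx j
    rwa [← sum_subset (f := fun k => ∑ j ∈ U, Ω j k * x k) (subset_univ U)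
      fun k _ hk => sum_eq_zero fun j hj => by rw [hU j hj k hk, zero_mul]] at h
  have hout : ∑ k ∈ U, ∑ j ∈ Uᶜ, Ω j k * x k = 0 := by
    rw [← neg_eq_zero, ← hin, ← sum_neg_distrib]
    refine sum_congr rfl fun k _ => ?_
    have := hcol k
    rw [← sum_compl_add_sum U] at this
    rw [← sum_mul, ← sum_mul]
    linear_combination (-x k) * this
  have hnn' : ∀ k ∈ U, ∀ j ∈ Uᶜ, 0 ≤ Ω j k * x k := fun k hk j hj =>
    mul_nonneg (hoff j k (ne_of_mem_of_not_mem hk (mem_compl.1 hj)).symm) (hnn k)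
  exact (sum_eq_zero_iff_of_nonneg fun j hj => hnn' k hk j hj).1
    ((sum_eq_zero_iff_of_nonneg fun k hk => sum_nonneg (hnn' k hk)).1 hout k hk) j
    (mem_compl.2 hj)

lemma apply_eq_zero_of_forall_notMem_basin (hoff : ∀ j k : Fin n, j ≠ k → 0 ≤ Ω j k)
    (hcol : ∀ k : Fin n, ∑ j, Ω j k = 0) (hx : Ω *ᵥ x = 0) (hnn : ∀ j, 0 ≤ x j) {v : Fin n}
    (hv : ∀ S, IsBasin Ω S → v ∉ S) : x v = 0 := by
  set U := univ.filter fun j => ∀ S, IsBasin Ω S → j ∉ S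
  have hU : ∀ j ∈ U, ∀ k ∉ U, Ω j k = 0 := fun j hj k hk => by
    obtain ⟨S, hS, hkS⟩ : ∃ S, IsBasin Ω S ∧ k ∈ S := by simpa [U] using hk
    exact hS.2 k hkS j ((mem_filter.1 hj).2 S hS)
  obtain ⟨S, hS, u, huS, hvu⟩ := exists_isBasin_reaches Ω v
  obtain ⟨a, b, hva, haU, hab, hbU⟩ :=
    hvu.exists_boundary (P := (· ∈ U)) (by simpa [U] using hv) (by simpa [U] using ⟨S, hS, huS⟩)
  have := mul_apply_eq_zero_of_no_inflow hoff hcol hx hnn hU haU hbU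
  exact apply_eq_zero_of_reaches hoff hx hnn hva ((mul_eq_zero.1 this).resolve_left hab.2)

lemma mul_apply_eq_zero_of_mem_basin (hoff : ∀ j k : Fin n, j ≠ k → 0 ≤ Ω j k)
    (hcol : ∀ k : Fin n, ∑ j, Ω j k = 0) (hx : Ω *ᵥ x = 0) (hnn : ∀ j, 0 ≤ x j)
    (hB : IsBasin Ω S) (hj : j ∈ S) (hk : k ∉ S) : Ω j k * x k = 0 := by
  by_cases hk' : ∃ S', IsBasin Ω S' ∧ k ∈ S'
  · obtain ⟨S', hB', hkS'⟩ := hk'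
    rw [hB'.2 k hkS' j fun hjS' => hk (hB'.eq_of_mem hB hjS' hj ▸ hkS'), zero_mul]
  · push Not at hk'
    rw [apply_eq_zero_of_forall_notMem_basin hoff hcol hx hnn hk', mul_zero]

lemma mulVec_indicator_eq_zero (hoff : ∀ j k : Fin n, j ≠ k → 0 ≤ Ω j k)
    (hcol : ∀ k : Fin n, ∑ j, Ω j k = 0) (hx : Ω *ᵥ x = 0) (hnn : ∀ j, 0 ≤ x j)
    (hB : IsBasin Ω S) : Ω *ᵥ S.indicator x = 0 := by
  funext j
  simp only [Matrix.mulVec, dotProduct, Pi.zero_apply]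
  by_cases hj : j ∈ S
  · rw [← show ∑ k, Ω j k * x k = 0 from congrFun hx j]
    refine sum_congr rfl fun k _ => ?_
    by_cases hk : k ∈ S
    · rw [Set.indicator_of_mem hk]
    · rw [Set.indicator_of_notMem hk, mul_zero,
        mul_apply_eq_zero_of_mem_basin hoff hcol hx hnn hB hj hk]
  · refine sum_eq_zero fun k _ => ?_
    by_cases hk : k ∈ S
    · rw [hB.2 k hk j hj, zero_mul]
    · rw [Set.indicator_of_notMem hk, mul_zero]

lemma sum_indicator_isBasin (hoff : ∀ j k : Fin n, j ≠ k → 0 ≤ Ω j k)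
    (hcol : ∀ k : Fin n, ∑ j, Ω j k = 0) (hx : Ω *ᵥ x = 0) (hnn : ∀ j, 0 ≤ x j) :
    ∑ η : {S // IsBasin Ω S}, η.1.indicator x = x := by
  funext j
  rw [Finset.sum_apply]
  by_cases hj : ∃ S, IsBasin Ω S ∧ j ∈ S
  · obtain ⟨S, hB, hjS⟩ := hj
    rw [sum_eq_single_of_mem ⟨S, hB⟩ (mem_univ _) fun η _ hη => Set.indicator_of_notMem
      (fun hjη => hη (Subtype.ext (η.2.eq_of_mem hB hjη hjS))) _, Set.indicator_of_mem hjS]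
  · push Not at hj
    rw [apply_eq_zero_of_forall_notMem_basin hoff hcol hx hnn hj]
    exact sum_eq_zero fun η _ => Set.indicator_of_notMem (hj η.1 η.2) _

lemma eq_sum_smul_statVec (hoff : ∀ j k : Fin n, j ≠ k → 0 ≤ Ω j k)
    (hcol : ∀ k : Fin n, ∑ j, Ω j k = 0) (hB : IsBasin Ω S) (hx : Ω *ᵥ x = 0)
    (hsupp : ∀ j ∉ S, x j = 0) : x = (∑ j, x j) • statVec Ω S := by
  obtain ⟨j₀, hj₀, hmin⟩ := exists_min_image (univ.filter (· ∈ S))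
    (fun j => x j / statVec Ω S j) (by obtain ⟨v, hv⟩ := hB.1.1; exact ⟨v, by simpa using hv⟩)
  rw [mem_filter] at hj₀
  set c := x j₀ / statVec Ω S j₀
  set y := x - c • statVec Ω S
  have hy : Ω *ᵥ y = 0 := by
    rw [Matrix.mulVec_sub, Matrix.mulVec_smul, hx, mulVec_statVec hcol hB, smul_zero, sub_zero]
  have hynn : ∀ j, 0 ≤ y j := fun j => by
    by_cases hj : j ∈ S
    · have := (le_div_iff₀ (statVec_pos hoff hB hj)).1 (hmin j (by simpa using hj))
      simpa [y] using this
    · simp [y, hsupp j hj, statVec, hj]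
  have hy₀ : y j₀ = 0 := by
    simp [y, c, div_mul_cancel₀ _ (statVec_pos hoff hB hj₀.2).ne']
  have hxc : x = c • statVec Ω S := by
    rw [← sub_eq_zero]
    funext j
    by_cases hj : j ∈ S
    · exact apply_eq_zero_of_reaches hoff hy hynn ((hB.1.2 j₀ hj₀.2 j).1 hj).2 hy₀
    · simp [hsupp j hj, statVec, hj]
  rw [hxc]
  simp [← mul_sum, sum_statVec hoff hB]

lemma exists_eq_sum_smul_statVec (hoff : ∀ j k : Fin n, j ≠ k → 0 ≤ Ω j k)
    (hcol : ∀ k : Fin n, ∑ j, Ω j k = 0) (hx : Ω *ᵥ x = 0) (hnn : ∀ j, 0 ≤ x j)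
    (hsum : ∑ j, x j = 1) : ∃ s : {S // IsBasin Ω S} → ℝ,
      (∀ η, 0 ≤ s η) ∧ ∑ η, s η = 1 ∧ x = ∑ η, s η • statVec Ω η.1 := by
  have hdecomp := sum_indicator_isBasin hoff hcol hx hnn
  refine ⟨fun η => ∑ j, η.1.indicator x j,
    fun η => sum_nonneg fun j _ => Set.indicator_nonneg (fun j _ => hnn j) j, ?_, ?_⟩
  · rw [sum_comm, ← hsum]
    exact sum_congr rfl fun j _ => by simpa [Finset.sum_apply] using congrFun hdecomp j
  · conv_lhs => rw [← hdecomp]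
    exact sum_congr rfl fun η _ => eq_sum_smul_statVec hoff hcol η.2
      (mulVec_indicator_eq_zero hoff hcol hx hnn η.2) fun j hj => Set.indicator_of_notMem hj _

lemma convex_stationary (Ω : Matrix (Fin n) (Fin n) ℝ) :
    Convex ℝ {x : Fin n → ℝ | Ω *ᵥ x = 0 ∧ (∀ j, 0 ≤ x j) ∧ ∑ j, x j = 1} := by
  rintro x ⟨hx, hxnn, hxsum⟩ y ⟨hy, hynn, hysum⟩ a b ha hb hab
  refine ⟨by simp [Matrix.mulVec_add, Matrix.mulVec_smul, hx, hy], fun j => ?_, ?_⟩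
  · simpa using add_nonneg (mul_nonneg ha (hxnn j)) (mul_nonneg hb (hynn j))
  · simp [sum_add_distrib, ← mul_sum, hxsum, hysum, hab]

end Stationary

theorem stmt7 (n : ℕ) (Ω : Matrix (Fin n) (Fin n) ℝ)
    (hoff : ∀ j k : Fin n, j ≠ k → 0 ≤ Ω j k)
    (hcol : ∀ k : Fin n, ∑ j, Ω j k = 0) :
    (∀ S : Set (Fin n), IsBasin Ω S → 0 < basinTotal Ω S) ∧
    {Λ : Fin n → ℝ | Ω.mulVec Λ = 0 ∧ (∀ j, 0 ≤ Λ j) ∧ (∑ j, Λ j) = 1} =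
      {Λ : Fin n → ℝ | ∃ s : {S : Set (Fin n) // IsBasin Ω S} → ℝ,
        (∀ η, 0 ≤ s η) ∧ (∑ η, s η) = 1 ∧ Λ = ∑ η, s η • statVec Ω η.1} := by
  refine ⟨fun S hS => basinTotal_pos hoff hS, Set.Subset.antisymm ?_ ?_⟩
  · rintro Λ ⟨hΛ, hnn, hsum⟩
    exact exists_eq_sum_smul_statVec hoff hcol hΛ hnn hsum
  · rintro Λ ⟨s, hs, hs1, rfl⟩
    exact (convex_stationary Ω).sum_mem (fun η _ => hs η) hs1 fun η _ =>
      ⟨mulVec_statVec hcol η.2, statVec_nonneg hoff η.2, sum_statVec hoff η.2⟩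
end

section
/- Let Ω be an n×n real matrix with Ω_{j k} ≥ 0 for all j ≠ k and all column sums zero, with basins N_1, …, N_{n_B} and N_B their union. Call a forest rooted in N_B 'pruned' if additionally every vertex of N_B is a fixed point of its parent function (no intra-basin edges are used). For each η define κ'_η ∈ ℝⁿ by: (κ'_η)_j = F' for j ∈ N_η, (κ'_η)_j = 0 for j ∈ N_B \ N_η, and (κ'_η)_l = F'_{η,l} for l ∉ N_B, where F' is the total weight of all pruned forests and F'_{η,l} is the total weight of those pruned forests that attach l to basin N_η. Then Ωᵀ · κ'_η = 0 for every η, and κ'_1, …, κ'_{n_B} form a basis of the kernel of Ωᵀ. -/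
open Matrix
open scoped Classical

/-- `N_B`: the union of all basins of `G_Ω`. -/
def basinUnion {n : ℕ} (Ω : Matrix (Fin n) (Fin n) ℝ) : Set (Fin n) :=
  {j | ∃ S : Set (Fin n), IsBasin Ω S ∧ j ∈ S}

/-- A parent function encoding a forest of `Fin n` rooted in `N_B`: every fixed point
lies in `N_B` and every vertex iterates to a fixed point. -/
def IsForest {n : ℕ} (Ω : Matrix (Fin n) (Fin n) ℝ) (p : Fin n → Fin n) : Prop :=
  (∀ v : Fin n, p v = v → v ∈ basinUnion Ω) ∧
    ∀ v : Fin n, ∃ m : ℕ, p (p^[m] v) = p^[m] v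

/-- A pruned forest: a forest rooted in `N_B` in which every vertex of `N_B` is a
fixed point of the parent function (no intra-basin edges). -/
def IsPrunedForest {n : ℕ} (Ω : Matrix (Fin n) (Fin n) ℝ) (p : Fin n → Fin n) : Prop :=
  IsForest Ω p ∧ ∀ v ∈ basinUnion Ω, p v = v

/-- The weight of a forest: the product of `Ω (p v) v` over its edges. -/
noncomputable def forestWt {n : ℕ} (Ω : Matrix (Fin n) (Fin n) ℝ) (p : Fin n → Fin n) : ℝ :=
  ∏ v ∈ Finset.univ.filter (fun v : Fin n => p v ≠ v), Ω (p v) v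

/-- The forest `p` attaches the vertex `l` to the basin `S`. -/
def attachesTo {n : ℕ} (p : Fin n → Fin n) (S : Set (Fin n)) (l : Fin n) : Prop :=
  ∃ m : ℕ, p^[m] l ∈ S

/-- `F'`: the total weight of all pruned forests. -/
noncomputable def prunedTotal {n : ℕ} (Ω : Matrix (Fin n) (Fin n) ℝ) : ℝ :=
  ∑ p ∈ Finset.univ.filter (fun p : Fin n → Fin n => IsPrunedForest Ω p), forestWt Ω p

/-- `F'_{η,l}`: the total weight of the pruned forests attaching `l` to basin `S`. -/
noncomputable def prunedAttach {n : ℕ} (Ω : Matrix (Fin n) (Fin n) ℝ) (S : Set (Fin n))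
    (l : Fin n) : ℝ :=
  ∑ p ∈ Finset.univ.filter
      (fun p : Fin n → Fin n => IsPrunedForest Ω p ∧ attachesTo p S l),
    forestWt Ω p

/-- The constraint vector `κ'_η` associated with the basin `S`. -/
noncomputable def kappaP {n : ℕ} (Ω : Matrix (Fin n) (Fin n) ℝ) (S : Set (Fin n)) :
    Fin n → ℝ :=
  fun j => if j ∈ S then prunedTotal Ω
    else if j ∈ basinUnion Ω then 0 else prunedAttach Ω S j

/-!
For `k ∉ N_B`, `(Ωᵀ κ'_η)_k = ∑_j (F'_{η,j} - F'_{η,k}) Ω_{jk}` expands into a signed sum over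
pairs `(j, p)` of a vertex and a pruned forest, which cancels under the involution that re-hangs the
subtree of `k` from `p k` to `j`; for `k` in a basin it vanishes because `κ'_η` is constant on that
basin. On `N_B`, `κ'_η` is `F'` times the indicator of `N_η`, and `F' > 0` (some pruned forest uses
only nonzero edges), so the `κ'_η` are independent. They span the kernel by the maximum principle:
if `xᵀ Ω = 0`, then `x` is constant on everything reachable from a maximiser, hence constant on
each basin, and it vanishes once it vanishes on `N_B`, because every vertex reaches `N_B`.
-/

theorem vecMul_apply_eq_sum_sub_mul {R ι : Type*} [CommRing R] [Fintype ι]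
    (A : Matrix ι ι R) {k : ι} (hcol : ∑ j, A j k = 0) (x : ι → R) :
    (x ᵥ* A) k = ∑ j, (x j - x k) * A j k := by
  simp [vecMul, dotProduct, sub_mul, ← Finset.mul_sum, hcol]

theorem iterate_apply_eq_of_forall_iterate_ne {α : Type*} {f g : α → α} {a x : α}
    (hfg : ∀ y, y ≠ a → g y = f y) (h : ∀ i, f^[i] x ≠ a) (m : ℕ) :
    g^[m] x = f^[m] x := by
  induction m with
  | zero => rfl
  | succ m ih =>
    rw [Function.iterate_succ_apply', Function.iterate_succ_apply', ih, hfg _ (h m)]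

theorem exists_isFixedPt_iterate_of_lt {α : Type*} {f : α → α} (μ : α → ℕ)
    (hμ : ∀ v, f v ≠ v → μ (f v) < μ v) (v : α) : ∃ m, Function.IsFixedPt f (f^[m] v) := by
  induction hv : μ v using Nat.strong_induction_on generalizing v with
  | _ N ih =>
    by_cases hfix : f v = v
    · exact ⟨0, hfix⟩
    · obtain ⟨m, hm⟩ := ih _ (hv ▸ hμ v hfix) (f v) rfl
      exact ⟨m + 1, by rwa [Function.iterate_succ_apply]⟩

section Basins

variable {n : ℕ} {Ω : Matrix (Fin n) (Fin n) ℝ}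

theorem IsBasin.eq_of_mem_s9 {S T : Set (Fin n)} (hS : IsBasin Ω S) (hT : IsBasin Ω T)
    {x : Fin n} (hxS : x ∈ S) (hxT : x ∈ T) : S = T :=
  Set.ext fun v => (hS.1.2 x hxS v).trans (hT.1.2 x hxT v).symm

theorem IsBasin.mem_of_reaches {S : Set (Fin n)} (hS : IsBasin Ω S) {u v : Fin n}
    (hu : u ∈ S) (huv : reaches Ω u v) : v ∈ S := by
  induction huv with
  | refl => exact hu
  | tail _ hwv hw => exact by_contra fun hv => hwv.2 (hS.2 _ hw _ hv)

theorem isBasin_setOf_reaches {u : Fin n} (hu : ∀ w, reaches Ω u w → reaches Ω w u) :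
    IsBasin Ω {w | reaches Ω u w} := by
  refine ⟨⟨⟨u, .refl⟩, fun a ha b => ⟨fun hb => ⟨(hu a ha).trans hb, (hu b hb).trans ha⟩,
    fun hab => Relation.ReflTransGen.trans ha hab.1⟩⟩, fun j hj k hk => ?_⟩
  by_contra hkj
  exact hk (Relation.ReflTransGen.tail hj ⟨fun h => hk (h ▸ hj), hkj⟩)

/-- A vertex `u` whose reachable set is as small as possible reaches back from everywhere it
reaches, so its reachable set is a basin. -/
theorem exists_reaches_mem_basinUnion (v : Fin n) : ∃ b ∈ basinUnion Ω, reaches Ω v b := by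
  let R : Fin n → Finset (Fin n) := fun u => Finset.univ.filter (reaches Ω u)
  have hR : ∀ u w, w ∈ R u ↔ reaches Ω u w := by simp [R]
  obtain ⟨u, hvu, hmin⟩ :=
    (R v).exists_min_image (fun u => (R u).card) ⟨v, (hR v v).2 .refl⟩
  rw [hR] at hvu
  refine ⟨u, ⟨_, isBasin_setOf_reaches fun w huw => ?_, .refl⟩, hvu⟩
  have hsub : R w ⊆ R u := fun a ha => (hR u a).2 (huw.trans ((hR w a).1 ha))
  have hRw := Finset.eq_of_subset_of_card_le hsub (hmin w ((hR v w).2 (hvu.trans huw)))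
  exact (hR w u).1 (hRw ▸ (hR u u).2 .refl)

end Basins

section Forests

variable {n : ℕ} {Ω : Matrix (Fin n) (Fin n) ℝ}

theorem IsForest.apply_ne {p : Fin n → Fin n} (hp : IsForest Ω p) {k : Fin n}
    (hk : k ∉ basinUnion Ω) : p k ≠ k :=
  fun h => hk (hp.1 k h)

theorem IsForest.iterate_apply_ne {p : Fin n → Fin n} (hp : IsForest Ω p) {k : Fin n}
    (hk : p k ≠ k) (t : ℕ) : p^[t] (p k) ≠ k := by
  intro ht
  obtain ⟨m, hm⟩ := hp.2 k
  have hper : Function.IsPeriodicPt p ((t + 1) * m) k :=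
    Function.IsPeriodicPt.mul_const (by rwa [Function.IsPeriodicPt, Function.IsFixedPt,
      Function.iterate_succ_apply]) m
  have hkm : p^[m] k = k := by
    have := hper.eq
    rwa [show (t + 1) * m = t * m + m by ring, Function.iterate_add_apply,
      Function.iterate_fixed hm] at this
  exact hk (hkm ▸ hm)

theorem attachesTo_iterate_iff {p : Fin n → Fin n} {S : Set (Fin n)} (hS : ∀ s ∈ S, p s = s)
    {v : Fin n} (t : ℕ) : attachesTo p S (p^[t] v) ↔ attachesTo p S v := by
  constructor
  · rintro ⟨m, hm⟩
    exact ⟨m + t, by rwa [Function.iterate_add_apply]⟩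
  · rintro ⟨m, hm⟩
    refine ⟨m, ?_⟩
    rwa [← Function.iterate_add_apply, add_comm, Function.iterate_add_apply,
      Function.iterate_fixed (hS _ hm)]

theorem attachesTo_apply_iff {p : Fin n → Fin n} {S : Set (Fin n)} {k : Fin n} (hk : k ∉ S) :
    attachesTo p S (p k) ↔ attachesTo p S k := by
  constructor
  · rintro ⟨m, hm⟩
    exact ⟨m + 1, by rwa [Function.iterate_succ_apply]⟩
  · rintro ⟨_ | m, hm⟩
    · exact absurd hm hk
    · exact ⟨m, by rwa [Function.iterate_succ_apply] at hm⟩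

theorem IsPrunedForest.attachesTo_iff_mem {p : Fin n → Fin n} (hp : IsPrunedForest Ω p)
    {S : Set (Fin n)} {j : Fin n} (hj : j ∈ basinUnion Ω) : attachesTo p S j ↔ j ∈ S := by
  simp [attachesTo, Function.iterate_fixed (hp.2 j hj)]

theorem IsPrunedForest.iterate_ne_of_not_attachesTo_iff {p : Fin n → Fin n}
    (hp : IsPrunedForest Ω p) {S : Set (Fin n)} (hS : S ⊆ basinUnion Ω) {j k : Fin n}
    (hjk : ¬(attachesTo p S j ↔ attachesTo p S k)) (t : ℕ) : p^[t] j ≠ k := fun ht =>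
  hjk (ht ▸ attachesTo_iterate_iff (fun s hs => hp.2 s (hS hs)) t).symm

theorem attachesTo_update_self_iff {p : Fin n → Fin n} {S : Set (Fin n)} {j k : Fin n}
    (hkS : k ∉ S) (hj : ∀ t, p^[t] j ≠ k) :
    attachesTo (Function.update p k j) S k ↔ attachesTo p S j := by
  rw [← attachesTo_apply_iff hkS, Function.update_self]
  simp [attachesTo, iterate_apply_eq_of_forall_iterate_ne (a := k)
    (fun y hy => Function.update_of_ne hy j p) hj]

theorem IsForest.attachesTo_update_apply_iff {p : Fin n → Fin n} (hp : IsForest Ω p)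
    {S : Set (Fin n)} {j k : Fin n} (hpk : p k ≠ k) (hkS : k ∉ S) :
    attachesTo (Function.update p k j) S (p k) ↔ attachesTo p S k := by
  rw [← attachesTo_apply_iff hkS (p := p)]
  simp [attachesTo, iterate_apply_eq_of_forall_iterate_ne (a := k)
    (fun y hy => Function.update_of_ne hy j p) (hp.iterate_apply_ne hpk)]

theorem IsPrunedForest.update {p : Fin n → Fin n} (hp : IsPrunedForest Ω p) {k j : Fin n}
    (hk : k ∉ basinUnion Ω) (hjk : j ≠ k) (hj : ∀ t, p^[t] j ≠ k) :
    IsPrunedForest Ω (Function.update p k j) := by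
  set q := Function.update p k j
  have hq : ∀ v, v ≠ k → q v = p v := fun v hv => Function.update_of_ne hv j p
  have hqk : q k = j := Function.update_self k j p
  have hfix : ∀ v, p v = v → v ≠ k → q v = v := fun v h hv => (hq v hv).trans h
  refine ⟨⟨fun v hv => ?_, fun v => ?_⟩,
    fun v hv => hfix v (hp.2 v hv) (ne_of_mem_of_not_mem hv hk)⟩
  · have hvk : v ≠ k := by
      rintro rfl
      exact hjk (hqk.symm.trans hv)
    exact hp.1.1 v ((hq v hvk).symm.trans hv)
  · by_cases hv : ∃ i, q^[i] v = k
    · obtain ⟨i, hi⟩ := hv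
      obtain ⟨m, hm⟩ := hp.1.2 j
      have hqj := iterate_apply_eq_of_forall_iterate_ne hq hj
      refine ⟨m + (i + 1), ?_⟩
      rw [Function.iterate_add_apply, Function.iterate_succ_apply', hi, hqk, hqj]
      exact hfix _ hm (hj m)
    · push Not at hv
      have hpv := iterate_apply_eq_of_forall_iterate_ne (fun y hy => (hq y hy).symm) hv
      obtain ⟨m, hm⟩ := hp.1.2 v
      refine ⟨m, ?_⟩
      rw [hpv] at hm
      exact hfix _ hm (hv m)

theorem forestWt_update {p : Fin n → Fin n} {k j : Fin n} (hpk : p k ≠ k) (hjk : j ≠ k) :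
    Ω (p k) k * forestWt Ω (Function.update p k j) = Ω j k * forestWt Ω p := by
  have hE : Finset.univ.filter (fun v => Function.update p k j v ≠ v) =
      Finset.univ.filter (fun v => p v ≠ v) := by
    ext v
    by_cases hv : v = k
    · subst hv
      simp [hpk, hjk]
    · simp [hv]
  have hk : k ∈ Finset.univ.filter (fun v => p v ≠ v) := by simpa using hpk
  simp only [forestWt, hE, ← Finset.mul_prod_erase _ _ hk, Function.update_self]
  rw [Finset.prod_congr rfl fun v hv => by rw [Function.update_of_ne (Finset.ne_of_mem_erase hv)]]
  ring

end Forests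

section Kernel

variable {n : ℕ} {Ω : Matrix (Fin n) (Fin n) ℝ}

/-- `(j, p) ↦ (p k, p[k ↦ j])` is an involution that preserves `Ω j k * forestWt Ω p` and swaps
which of `j`, `k` is attached to `S`, so the expanded sum cancels. -/
theorem sum_prunedAttach_sub_mul_eq_zero {S : Set (Fin n)} (hS : S ⊆ basinUnion Ω) {k : Fin n}
    (hk : k ∉ basinUnion Ω) :
    ∑ j, (prunedAttach Ω S j - prunedAttach Ω S k) * Ω j k = 0 := by
  let w : Fin n → (Fin n → Fin n) → ℝ := fun j p =>
    if IsPrunedForest Ω p ∧ attachesTo p S j then forestWt Ω p else 0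
  let g : Fin n × (Fin n → Fin n) → ℝ := fun x => (w x.1 x.2 - w k x.2) * Ω x.1 k
  let σ : Fin n × (Fin n → Fin n) → Fin n × (Fin n → Fin n) :=
    fun x => (x.2 k, Function.update x.2 k x.1)
  have hσσ : ∀ x, σ (σ x) = x := fun x => by simp [σ]
  have hg : ∀ x, g x ≠ 0 → g (σ x) = -g x := by
    rintro ⟨j, p⟩ hx
    have hp : IsPrunedForest Ω p := by
      by_contra hp
      simp [g, w, hp] at hx
    have hjk : ¬(attachesTo p S j ↔ attachesTo p S k) := fun h => by simp [g, w, h] at hx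
    have hj := hp.iterate_ne_of_not_attachesTo_iff hS hjk
    have hj0 : j ≠ k := hj 0
    have hpk := hp.1.apply_ne hk
    have hkS : k ∉ S := fun h => hk (hS h)
    have hq := hp.update hk hj0 hj
    have hqk := attachesTo_update_self_iff hkS hj
    have hqpk := hp.1.attachesTo_update_apply_iff (j := j) hpk hkS
    have hwt := forestWt_update (Ω := Ω) hpk hj0
    by_cases hjS : attachesTo p S j
    · have hkS' : ¬attachesTo p S k := fun h => hjk (iff_of_true hjS h)
      simp [g, σ, w, hp, hq, hjS, hkS', hqk, hqpk]
      linarith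
    · have hkS' : attachesTo p S k := by tauto
      simp [g, σ, w, hp, hq, hjS, hkS', hqk, hqpk]
      linarith
  have hsum : ∑ x, g x = 0 := by
    refine Finset.sum_involution (fun x _ => σ x) (fun x _ => ?_)
      (fun x _ hx hσx => hx (by linarith [hσx ▸ hg x hx])) (fun _ _ => Finset.mem_univ _)
      (fun x _ => hσσ x)
    rcases eq_or_ne (g x) 0 with hx | hx
    · rcases eq_or_ne (g (σ x)) 0 with hy | hy
      · rw [hx, hy, add_zero]
      · linarith [hσσ x ▸ hg _ hy]
    · rw [hg x hx, add_neg_cancel]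
  rw [Fintype.sum_prod_type] at hsum
  simpa [g, w, prunedAttach, Finset.sum_filter, ← Finset.sum_sub_distrib, Finset.sum_mul]
    using hsum

theorem prunedAttach_of_mem {S : Set (Fin n)} {j : Fin n} (hj : j ∈ S) :
    prunedAttach Ω S j = prunedTotal Ω := by
  unfold prunedAttach prunedTotal
  congr 1
  exact Finset.filter_congr fun p _ => and_iff_left ⟨0, hj⟩

theorem prunedAttach_of_not_mem {S : Set (Fin n)} {j : Fin n} (hjB : j ∈ basinUnion Ω)
    (hjS : j ∉ S) : prunedAttach Ω S j = 0 :=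
  Finset.sum_eq_zero fun p hp => by
    obtain ⟨hpF, hpj⟩ := (Finset.mem_filter.1 hp).2
    exact absurd ((hpF.attachesTo_iff_mem hjB).1 hpj) hjS

theorem kappaP_eq_prunedAttach (S : Set (Fin n)) : kappaP Ω S = prunedAttach Ω S := by
  funext j
  unfold kappaP
  split_ifs with hjS hjB
  · exact (prunedAttach_of_mem hjS).symm
  · exact (prunedAttach_of_not_mem hjB hjS).symm
  · rfl

theorem kappaP_of_mem_basin {S T : Set (Fin n)} (hS : IsBasin Ω S) (hT : IsBasin Ω T)
    {v : Fin n} (hv : v ∈ T) : kappaP Ω S v = if S = T then prunedTotal Ω else 0 := by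
  by_cases hST : S = T
  · subst hST
    simp [kappaP, hv]
  · have hvS : v ∉ S := fun hvS => hST (hS.eq_of_mem_s9 hT hvS hv)
    simp [kappaP, hvS, hST, show v ∈ basinUnion Ω from ⟨T, hT, hv⟩]

theorem sum_smul_kappaP_apply (c : {S : Set (Fin n) // IsBasin Ω S} → ℝ)
    (η : {S : Set (Fin n) // IsBasin Ω S}) {v : Fin n} (hv : v ∈ η.1) :
    (∑ ξ, c ξ • kappaP Ω ξ.1) v = c η * prunedTotal Ω := by
  rw [Finset.sum_apply, Finset.sum_eq_single η]
  · simp [kappaP_of_mem_basin η.2 η.2 hv]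
  · intro ξ _ hξ
    simp [kappaP_of_mem_basin ξ.2 η.2 hv, Subtype.coe_ne_coe.2 hξ]
  · simp

theorem kappaP_vecMul_eq_zero (hcol : ∀ k : Fin n, ∑ j, Ω j k = 0) {S : Set (Fin n)}
    (hS : IsBasin Ω S) : kappaP Ω S ᵥ* Ω = 0 := by
  funext k
  rw [vecMul_apply_eq_sum_sub_mul Ω (hcol k), Pi.zero_apply]
  by_cases hk : k ∈ basinUnion Ω
  · obtain ⟨T, hT, hkT⟩ := hk
    refine Finset.sum_eq_zero fun j _ => ?_
    by_cases hjT : j ∈ T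
    · rw [kappaP_of_mem_basin hS hT hjT, kappaP_of_mem_basin hS hT hkT, sub_self, zero_mul]
    · rw [hT.2 k hkT j hjT, mul_zero]
  · rw [kappaP_eq_prunedAttach]
    exact sum_prunedAttach_sub_mul_eq_zero (fun s hs => ⟨S, hS, hs⟩) hk

end Kernel

section MaximumPrinciple

variable {n : ℕ} {Ω : Matrix (Fin n) (Fin n) ℝ}

theorem eq_of_edgeRel_of_vecMul_apply_eq_zero (hoff : ∀ j k : Fin n, j ≠ k → 0 ≤ Ω j k)
    {k : Fin n} (hcol : ∑ j, Ω j k = 0) {x : Fin n → ℝ} (hx : (x ᵥ* Ω) k = 0)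
    (hmax : ∀ j, edgeRel Ω k j → x j ≤ x k) {j : Fin n} (hkj : edgeRel Ω k j) : x j = x k := by
  have hnonpos : ∀ i ∈ Finset.univ, (x i - x k) * Ω i k ≤ 0 := by
    intro i _
    by_cases hik : i = k
    · simp [hik]
    by_cases hΩ : Ω i k = 0
    · simp [hΩ]
    exact mul_nonpos_of_nonpos_of_nonneg (sub_nonpos.2 (hmax i ⟨Ne.symm hik, hΩ⟩)) (hoff i k hik)
  rw [vecMul_apply_eq_sum_sub_mul Ω hcol, Finset.sum_eq_zero_iff_of_nonpos hnonpos] at hx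
  exact sub_eq_zero.1 ((mul_eq_zero.1 (hx j (Finset.mem_univ j))).resolve_right hkj.2)

theorem eq_of_reaches_of_vecMul_eq_zero (hoff : ∀ j k : Fin n, j ≠ k → 0 ≤ Ω j k)
    (hcol : ∀ k : Fin n, ∑ j, Ω j k = 0) {x : Fin n → ℝ} (hx : x ᵥ* Ω = 0) {k : Fin n}
    (hmax : ∀ v, reaches Ω k v → x v ≤ x k) {v : Fin n} (hkv : reaches Ω k v) : x v = x k := by
  induction hkv with
  | refl => rfl
  | tail hkw hwv ih =>
    rw [← ih]
    exact eq_of_edgeRel_of_vecMul_apply_eq_zero hoff (hcol _) (congrFun hx _)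
      (fun j hwj => ih ▸ hmax j (hkw.tail hwj)) hwv

theorem IsBasin.eq_of_vecMul_eq_zero (hoff : ∀ j k : Fin n, j ≠ k → 0 ≤ Ω j k)
    (hcol : ∀ k : Fin n, ∑ j, Ω j k = 0) {S : Set (Fin n)} (hS : IsBasin Ω S)
    {x : Fin n → ℝ} (hx : x ᵥ* Ω = 0) {a b : Fin n} (ha : a ∈ S) (hb : b ∈ S) : x a = x b := by
  obtain ⟨m, hm, hmax⟩ := S.exists_max_image x S.toFinite hS.1.1
  have hconst : ∀ v ∈ S, x v = x m := fun v hv =>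
    eq_of_reaches_of_vecMul_eq_zero hoff hcol hx (fun u hu => hmax u (hS.mem_of_reaches hm hu))
      ((hS.1.2 m hm v).1 hv).1
  rw [hconst a ha, hconst b hb]

theorem le_zero_of_vecMul_eq_zero (hoff : ∀ j k : Fin n, j ≠ k → 0 ≤ Ω j k)
    (hcol : ∀ k : Fin n, ∑ j, Ω j k = 0) {x : Fin n → ℝ} (hx : x ᵥ* Ω = 0)
    (hB : ∀ v ∈ basinUnion Ω, x v ≤ 0) (v : Fin n) : x v ≤ 0 := by
  obtain ⟨m, -, hm⟩ := Finset.univ.exists_max_image x ⟨v, Finset.mem_univ v⟩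
  obtain ⟨b, hb, hmb⟩ := exists_reaches_mem_basinUnion (Ω := Ω) m
  have := eq_of_reaches_of_vecMul_eq_zero hoff hcol hx (fun u _ => hm u (Finset.mem_univ u)) hmb
  linarith [hm v (Finset.mem_univ v), hB b hb]

theorem eq_of_vecMul_eq_of_eqOn_basinUnion (hoff : ∀ j k : Fin n, j ≠ k → 0 ≤ Ω j k)
    (hcol : ∀ k : Fin n, ∑ j, Ω j k = 0) {x y : Fin n → ℝ} (hxy : x ᵥ* Ω = y ᵥ* Ω)
    (hB : ∀ v ∈ basinUnion Ω, x v = y v) : x = y := by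
  have hz : (x - y) ᵥ* Ω = 0 := by rw [sub_vecMul, hxy, sub_self]
  have hz' : (y - x) ᵥ* Ω = 0 := by rw [sub_vecMul, hxy, sub_self]
  funext v
  have h1 := le_zero_of_vecMul_eq_zero hoff hcol hz (fun u hu => by simp [hB u hu]) v
  have h2 := le_zero_of_vecMul_eq_zero hoff hcol hz' (fun u hu => by simp [hB u hu]) v
  simp only [Pi.sub_apply] at h1 h2
  linarith

end MaximumPrinciple

def reachesBasinWithin {n : ℕ} (Ω : Matrix (Fin n) (Fin n) ℝ) : ℕ → Fin n → Prop
  | 0, v => v ∈ basinUnion Ω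
  | m + 1, v => reachesBasinWithin Ω m v ∨ ∃ w, edgeRel Ω v w ∧ reachesBasinWithin Ω m w

section Positivity

variable {n : ℕ} {Ω : Matrix (Fin n) (Fin n) ℝ}

theorem exists_reachesBasinWithin (v : Fin n) : ∃ m, reachesBasinWithin Ω m v := by
  obtain ⟨b, hb, hvb⟩ := exists_reaches_mem_basinUnion (Ω := Ω) v
  induction hvb using Relation.ReflTransGen.head_induction_on with
  | refl => exact ⟨0, hb⟩
  | head hvw _ ih =>
    obtain ⟨m, hm⟩ := ih
    exact ⟨m + 1, .inr ⟨_, hvw, hm⟩⟩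

theorem exists_rank_lt_of_edgeRel :
    ∃ μ : Fin n → ℕ, ∀ v ∉ basinUnion Ω, ∃ w, edgeRel Ω v w ∧ μ w < μ v := by
  refine ⟨fun v => Nat.find (exists_reachesBasinWithin (Ω := Ω) v), fun v hv => ?_⟩
  have hspec := Nat.find_spec (exists_reachesBasinWithin (Ω := Ω) v)
  obtain ⟨m, hm⟩ : ∃ m, Nat.find (exists_reachesBasinWithin (Ω := Ω) v) = m + 1 :=
    Nat.exists_eq_succ_of_ne_zero fun h => hv (by rwa [h] at hspec)
  rw [hm] at hspec
  rcases hspec with h | ⟨w, hvw, hw⟩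
  · exact absurd h (Nat.find_min (m := m) _ (by omega))
  · exact ⟨w, hvw, (Nat.find_le hw).trans_lt (by simp only [hm]; omega)⟩

theorem exists_isPrunedForest_forestWt_pos (hoff : ∀ j k : Fin n, j ≠ k → 0 ≤ Ω j k) :
    ∃ p, IsPrunedForest Ω p ∧ 0 < forestWt Ω p := by
  obtain ⟨μ, hμ⟩ := exists_rank_lt_of_edgeRel (Ω := Ω)
  choose f hf using hμ
  let p : Fin n → Fin n := fun v => if hv : v ∈ basinUnion Ω then v else f v hv
  have hpB : ∀ v ∈ basinUnion Ω, p v = v := fun v hv => dif_pos hv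
  have hpE : ∀ v, p v ≠ v → edgeRel Ω v (p v) ∧ μ (p v) < μ v := fun v hne => by
    have hv : v ∉ basinUnion Ω := fun hv => hne (hpB v hv)
    simpa [p, hv] using hf v hv
  have hfix : ∀ v, p v = v → v ∈ basinUnion Ω := fun v hv =>
    by_contra fun h => (hf v h).1.1 ((dif_neg h).symm.trans hv).symm
  refine ⟨p, ⟨⟨hfix, exists_isFixedPt_iterate_of_lt μ fun v h => (hpE v h).2⟩, hpB⟩, ?_⟩
  refine Finset.prod_pos fun v hv => ?_
  have hne : p v ≠ v := (Finset.mem_filter.1 hv).2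
  exact (hoff _ _ hne).lt_of_ne (hpE v hne).1.2.symm

theorem prunedTotal_pos (hoff : ∀ j k : Fin n, j ≠ k → 0 ≤ Ω j k) : 0 < prunedTotal Ω := by
  obtain ⟨p, hp, hwp⟩ := exists_isPrunedForest_forestWt_pos hoff
  exact Finset.sum_pos'
    (fun q _ => Finset.prod_nonneg fun v hv => hoff _ _ (Finset.mem_filter.1 hv).2)
    ⟨p, Finset.mem_filter.2 ⟨Finset.mem_univ _, hp⟩, hwp⟩

end Positivity

theorem stmt9 (n : ℕ) (Ω : Matrix (Fin n) (Fin n) ℝ)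
    (hoff : ∀ j k : Fin n, j ≠ k → 0 ≤ Ω j k)
    (hcol : ∀ k : Fin n, ∑ j, Ω j k = 0) :
    (∀ S : Set (Fin n), IsBasin Ω S → Ωᵀ.mulVec (kappaP Ω S) = 0) ∧
    LinearIndependent ℝ (fun η : {S : Set (Fin n) // IsBasin Ω S} => kappaP Ω η.1) ∧
    Submodule.span ℝ (Set.range fun η : {S : Set (Fin n) // IsBasin Ω S} => kappaP Ω η.1) =
      LinearMap.ker (Ωᵀ).mulVecLin := by
  have hker : ∀ S, IsBasin Ω S → Ωᵀ *ᵥ kappaP Ω S = 0 := fun S hS => by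
    rw [mulVec_transpose]
    exact kappaP_vecMul_eq_zero hcol hS
  have hspan_le : Submodule.span ℝ (Set.range fun η : {S // IsBasin Ω S} => kappaP Ω η.1) ≤
      LinearMap.ker (Ωᵀ).mulVecLin :=
    Submodule.span_le.2 (Set.range_subset_iff.2 fun η => hker η.1 η.2)
  have hF : prunedTotal Ω ≠ 0 := (prunedTotal_pos hoff).ne'
  refine ⟨hker, Fintype.linearIndependent_iff.2 fun c hc η => ?_,
    le_antisymm hspan_le fun x hx => ?_⟩
  · have hcη := congrFun hc η.2.1.1.some
    rw [sum_smul_kappaP_apply c η η.2.1.1.some_mem] at hcη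
    exact (mul_eq_zero.1 hcη).resolve_right hF
  · let c := fun η : {S // IsBasin Ω S} => x η.2.1.1.some / prunedTotal Ω
    have hy : ∑ η, c η • kappaP Ω η.1 ∈
        Submodule.span ℝ (Set.range fun η : {S // IsBasin Ω S} => kappaP Ω η.1) :=
      Submodule.sum_mem _ fun η _ => Submodule.smul_mem _ _ (Submodule.subset_span ⟨η, rfl⟩)
    have hy0 := hspan_le hy
    simp only [LinearMap.mem_ker, mulVecLin_apply, mulVec_transpose] at hx hy0
    suffices x = ∑ η, c η • kappaP Ω η.1 from this ▸ hy
    refine eq_of_vecMul_eq_of_eqOn_basinUnion hoff hcol (hx.trans hy0.symm)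
      fun v ⟨T, hT, hv⟩ => ?_
    rw [sum_smul_kappaP_apply c ⟨T, hT⟩ hv, div_mul_cancel₀ _ hF]
    exact hT.eq_of_vecMul_eq_zero hoff hcol hx hv hT.1.1.some_mem
end

section
/- Let L_1, …, L_N be n×n complex GPM Lindblad operators, L_α = P_{σ_α} · D_α, and let Ω be the associated weight matrix with basins N_1, …, N_{n_B} and N_B their union. Let P_η be the diagonal 0-1 matrix projecting onto the coordinates in N_η and P_B = ∑_η P_η. Then for every α and every η, P_η commutes with P_B · L_α · P_B; moreover P_η commutes with P_B · H · P_B for every diagonal matrix H. -/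
open scoped Classical

/-- The weight matrix associated to Lindblad operators `L α`:
`Ω j k = ∑ α |(L α) j k|²` for `j ≠ k`, with zero column sums. -/
noncomputable def weightMat {n N : ℕ} (L : Fin N → Matrix (Fin n) (Fin n) ℂ) :
    Matrix (Fin n) (Fin n) ℝ :=
  Matrix.of fun j k =>
    if j = k then -∑ l ∈ Finset.univ.erase k, ∑ α, ‖L α l k‖ ^ 2
    else ∑ α, ‖L α j k‖ ^ 2

/-- The diagonal 0-1 projector onto the coordinates in `S`. -/
noncomputable def setProj {n : ℕ} (S : Set (Fin n)) : Matrix (Fin n) (Fin n) ℂ :=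
  Matrix.diagonal fun j => if j ∈ S then 1 else 0

/-!
A basin `S` is closed under edges leaving it, and every point of `N_B` lies in exactly one
basin, so an edge `k → j` with `k ∈ N_B` has `j ∈ S ↔ k ∈ S`. Compressing `L α` (or a diagonal
matrix) to `N_B` leaves only entries `(j, k)` with `j, k ∈ N_B` that are either diagonal or
edges of `G_Ω`; hence no entry crosses the boundary of `S`, which is exactly what commuting
with the diagonal projector `P_S` means.
-/

section SetProj

variable {n : ℕ}

theorem commute_setProj_of_mem_iff (S : Set (Fin n)) (M : Matrix (Fin n) (Fin n) ℂ)
    (h : ∀ j k, M j k ≠ 0 → (j ∈ S ↔ k ∈ S)) : Commute (setProj S) M := by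
  show setProj S * M = M * setProj S
  ext j k
  rw [setProj, Matrix.diagonal_mul, Matrix.mul_diagonal]
  by_cases hM : M j k = 0
  · simp [hM]
  · by_cases hj : j ∈ S
    · simp [hj, (h j k hM).mp hj, mul_comm]
    · rw [if_neg hj, if_neg (fun hk => hj ((h j k hM).mpr hk)), zero_mul, mul_zero]

theorem setProj_mul_mul_setProj_apply (S : Set (Fin n)) (M : Matrix (Fin n) (Fin n) ℂ)
    (j k : Fin n) :
    (setProj S * M * setProj S) j k =
      (if j ∈ S then 1 else 0) * M j k * (if k ∈ S then 1 else 0) := by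
  rw [setProj, Matrix.mul_diagonal, Matrix.diagonal_mul]

theorem mem_and_mem_of_setProj_mul_mul_setProj_apply_ne_zero {S : Set (Fin n)}
    {M : Matrix (Fin n) (Fin n) ℂ} {j k : Fin n} (h : (setProj S * M * setProj S) j k ≠ 0) :
    j ∈ S ∧ k ∈ S ∧ M j k ≠ 0 := by
  rw [setProj_mul_mul_setProj_apply] at h
  refine ⟨?_, ?_, ?_⟩ <;> by_contra h' <;> simp_all

end SetProj

namespace IsBasin

variable {n : ℕ} {Ω : Matrix (Fin n) (Fin n) ℝ} {S : Set (Fin n)}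

theorem eq_of_mem_s11 {S' : Set (Fin n)} (hS : IsBasin Ω S) (hS' : IsBasin Ω S') {u : Fin n}
    (hu : u ∈ S) (hu' : u ∈ S') : S = S' := by
  ext v
  rw [hS.1.2 u hu v, hS'.1.2 u hu' v]

theorem mem_of_ne_zero (hS : IsBasin Ω S) {j k : Fin n} (hk : k ∈ S) (hΩ : Ω j k ≠ 0) :
    j ∈ S :=
  by_contra fun hj => hΩ (hS.2 k hk j hj)

theorem mem_iff_of_ne_zero (hS : IsBasin Ω S) {j k : Fin n} (hk : k ∈ basinUnion Ω)
    (hΩ : Ω j k ≠ 0) : j ∈ S ↔ k ∈ S := by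
  obtain ⟨S', hS', hkS'⟩ := hk
  refine ⟨fun hj => ?_, fun hk => hS.mem_of_ne_zero hk hΩ⟩
  rwa [hS.eq_of_mem_s11 hS' hj (hS'.mem_of_ne_zero hkS' hΩ)]

theorem commute_setProj_basinUnion_compression (hS : IsBasin Ω S)
    {M : Matrix (Fin n) (Fin n) ℂ} (hM : ∀ j k, j ≠ k → M j k ≠ 0 → Ω j k ≠ 0) :
    Commute (setProj S) (setProj (basinUnion Ω) * M * setProj (basinUnion Ω)) := by
  refine commute_setProj_of_mem_iff S _ fun j k hentry => ?_
  obtain ⟨-, hkB, hMjk⟩ := mem_and_mem_of_setProj_mul_mul_setProj_apply_ne_zero hentry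
  by_cases hjk : j = k
  · rw [hjk]
  · exact hS.mem_iff_of_ne_zero hkB (hM j k hjk hMjk)

end IsBasin

theorem weightMat_apply_ne_zero {n N : ℕ} {L : Fin N → Matrix (Fin n) (Fin n) ℂ} {j k : Fin n}
    (hjk : j ≠ k) {α : Fin N} (hL : L α j k ≠ 0) : weightMat L j k ≠ 0 := by
  rw [weightMat, Matrix.of_apply, if_neg hjk]
  refine (Finset.sum_pos' (fun β _ => by positivity) ⟨α, Finset.mem_univ α, ?_⟩).ne'
  positivity

theorem stmt11_general (n N : ℕ)
    (L : Fin N → Matrix (Fin n) (Fin n) ℂ) :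
    ∀ S : Set (Fin n), IsBasin (weightMat L) S →
      (∀ α, Commute (setProj S)
        (setProj (basinUnion (weightMat L)) * L α * setProj (basinUnion (weightMat L)))) ∧
      (∀ h : Fin n → ℂ, Commute (setProj S)
        (setProj (basinUnion (weightMat L)) * Matrix.diagonal h *
          setProj (basinUnion (weightMat L)))) := by
  intro S hS
  refine ⟨fun α => ?_, fun h => ?_⟩
  · exact hS.commute_setProj_basinUnion_compression fun _ _ hjk hL =>
      weightMat_apply_ne_zero hjk hL
  · exact hS.commute_setProj_basinUnion_compression fun _ _ hjk hd =>
      absurd (Matrix.diagonal_apply_ne h hjk) hd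

theorem stmt11 (n N : ℕ) (σ : Fin N → Equiv.Perm (Fin n)) (d : Fin N → Fin n → ℂ)
    (L : Fin N → Matrix (Fin n) (Fin n) ℂ)
    (hL : ∀ α, L α = permMat n (σ α) * Matrix.diagonal (d α)) :
    ∀ S : Set (Fin n), IsBasin (weightMat L) S →
      (∀ α, Commute (setProj S)
        (setProj (basinUnion (weightMat L)) * L α * setProj (basinUnion (weightMat L)))) ∧
      (∀ h : Fin n → ℂ, Commute (setProj S)
        (setProj (basinUnion (weightMat L)) * Matrix.diagonal h *
          setProj (basinUnion (weightMat L)))) :=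
  stmt11_general n N L
end

section
/- Let L_1, …, L_N be n×n complex GPM Lindblad operators, L_α = P_{σ_α} · D_α, with associated weight matrix Ω, basins N_1, …, N_{n_B}, and N_B their union. Let ∼ be an equivalence relation on a subset N_∼ ⊆ N_B such that: (i) j ∼ k implies |D_{α,j}| = |D_{α,k}| for all α; and (ii) if j ∼ k and σ_α(j), σ_α(k) ∈ N_B, then σ_α(j), σ_α(k) ∈ N_∼ and σ_α(j) ∼ σ_α(k). Then reachability in the induced coherence graph G_∼ is symmetric: whenever there is a directed path in G_∼ from vertex (j₁,k₁) to vertex (j₂,k₂), there is also a directed path from (j₂,k₂) to (j₁,k₁). In particular the weakly connected components of G_∼ are strongly connected. -/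
open scoped Classical

/-- Vertices of the induced coherence graph `G_∼`:
pairs `(j,k)` with `j,k ∈ N_∼`, `j ∼ k`, `j ≠ k`. -/
def cVert {n : ℕ} (Nsim : Set (Fin n)) (r : Fin n → Fin n → Prop)
    (x : Fin n × Fin n) : Prop :=
  x.1 ∈ Nsim ∧ x.2 ∈ Nsim ∧ r x.1 x.2 ∧ x.1 ≠ x.2

/-- Edges of the induced coherence graph `G_∼`: for some `α`,
`(j₁,k₁) →_α (σ_α j₁, σ_α k₁)` whenever `D_{α,j₁} ≠ 0` and `D_{α,k₁} ≠ 0`,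
between vertices of `G_∼`. -/
def cEdge {n N : ℕ} (σ : Fin N → Equiv.Perm (Fin n)) (d : Fin N → Fin n → ℂ)
    (Nsim : Set (Fin n)) (r : Fin n → Fin n → Prop) (x y : Fin n × Fin n) : Prop :=
  cVert Nsim r x ∧ cVert Nsim r y ∧
    ∃ α, σ α x.1 = y.1 ∧ σ α x.2 = y.2 ∧ d α x.1 ≠ 0 ∧ d α x.2 ≠ 0

/-!
An edge `(j, k) → (σ_α j, σ_α k)` of `G_∼` can be undone as follows. Since `j` lies in a basin
and `D_{α,j} ≠ 0`, the state `σ_α j` lies in the same basin, so some admissible word `w` leads from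
`σ_α j` back to `j`. By (i) and (ii) the word `α w` stays admissible on every vertex of `G_∼` whose
first coordinate is `j`, and maps it along a path of `G_∼` to a vertex with first coordinate `j`.
The induced permutation of pairs has finite order, so iterating it from `(σ_α j, σ_α k)` returns
to `(j, k)`.
-/

lemma Relation.ReflTransGen.of_apply_perm {α : Type*} [Finite α] {R : α → α → Prop}
    (e : Equiv.Perm α) {P : α → Prop}
    (hstep : ∀ x, P x → P (e x) ∧ Relation.ReflTransGen R x (e x)) {x : α} (hx : P x) :
    Relation.ReflTransGen R (e x) x := by
  have hpow : ∀ i : ℕ, ∀ y, P y → Relation.ReflTransGen R y ((e ^ i) y) := by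
    intro i
    induction i with
    | zero => exact fun y _ => .refl
    | succ i ih =>
      intro y hy
      rw [pow_succ, Equiv.Perm.mul_apply]
      exact (hstep y hy).2.trans (ih _ (hstep y hy).1)
  have hret : (e ^ (orderOf e - 1)) (e x) = x := by
    rw [← Equiv.Perm.mul_apply, ← pow_succ, Nat.sub_add_cancel (orderOf_pos e),
      pow_orderOf_eq_one, Equiv.Perm.one_apply]
  have hpath := hpow (orderOf e - 1) _ (hstep x hx).1
  rwa [hret] at hpath

lemma Relation.ReflTransGen.symm_of_forall_rel {α : Type*} {R : α → α → Prop}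
    (h : ∀ x y, R x y → Relation.ReflTransGen R y x) {x y : α}
    (hxy : Relation.ReflTransGen R x y) : Relation.ReflTransGen R y x := by
  induction hxy with
  | refl => exact .refl
  | tail _ hbc ih => exact (h _ _ hbc).trans ih

section Words

variable {n N : ℕ} (σ : Fin N → Equiv.Perm (Fin n)) (d : Fin N → Fin n → ℂ)

def wordPerm : List (Fin N) → Equiv.Perm (Fin n)
  | [] => 1
  | α :: w => wordPerm w * σ α

def IsAdmissibleWord : List (Fin N) → Fin n → Prop
  | [], _ => True
  | α :: w, a => d α a ≠ 0 ∧ IsAdmissibleWord w (σ α a)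

end Words

section WeightMatrix

variable {n N : ℕ} {σ : Fin N → Equiv.Perm (Fin n)} {d : Fin N → Fin n → ℂ}
  {L : Fin N → Matrix (Fin n) (Fin n) ℂ}

lemma gpm_apply (hL : ∀ α, L α = permMat n (σ α) * Matrix.diagonal (d α))
    (α : Fin N) (j k : Fin n) :
    L α j k = if j = σ α k then d α k else 0 := by
  rw [hL, Matrix.mul_apply]
  simp [permMat, Matrix.diagonal]

lemma weightMat_ne_zero_iff (hL : ∀ α, L α = permMat n (σ α) * Matrix.diagonal (d α))
    {a c : Fin n} (hne : c ≠ a) :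
    weightMat L c a ≠ 0 ↔ ∃ α, σ α a = c ∧ d α a ≠ 0 := by
  have hsum : weightMat L c a = ∑ α, ‖L α c a‖ ^ 2 := by simp [weightMat, hne]
  rw [hsum, Ne, Finset.sum_eq_zero_iff_of_nonneg fun _ _ => by positivity]
  simp only [Finset.mem_univ, true_implies, not_forall, gpm_apply hL]
  refine exists_congr fun α => ?_
  by_cases hc : c = σ α a
  · simp [hc]
  · simp [hc, Ne.symm hc]

lemma IsBasin.apply_mem (hL : ∀ α, L α = permMat n (σ α) * Matrix.diagonal (d α))
    {S : Set (Fin n)} (hS : IsBasin (weightMat L) S) {a : Fin n} (ha : a ∈ S) {α : Fin N}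
    (hd : d α a ≠ 0) : σ α a ∈ S := by
  by_cases hfix : σ α a = a
  · rwa [hfix]
  by_contra hout
  exact (weightMat_ne_zero_iff hL hfix).2 ⟨α, rfl, hd⟩ (hS.2 a ha _ hout)

lemma exists_isAdmissibleWord_of_reaches
    (hL : ∀ α, L α = permMat n (σ α) * Matrix.diagonal (d α))
    {a b : Fin n} (h : reaches (weightMat L) a b) :
    ∃ w, IsAdmissibleWord σ d w a ∧ wordPerm σ w a = b := by
  induction h using Relation.ReflTransGen.head_induction_on with
  | refl => exact ⟨[], trivial, rfl⟩
  | head hedge _ ih =>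
    obtain ⟨w, hw, hwb⟩ := ih
    obtain ⟨α, rfl, hd⟩ := (weightMat_ne_zero_iff hL (Ne.symm hedge.1)).1 hedge.2
    exact ⟨α :: w, ⟨hd, hw⟩, hwb⟩

lemma basinUnion_apply_mem_and_exists_return
    (hL : ∀ α, L α = permMat n (σ α) * Matrix.diagonal (d α))
    {a : Fin n} (ha : a ∈ basinUnion (weightMat L)) {α : Fin N} (hd : d α a ≠ 0) :
    σ α a ∈ basinUnion (weightMat L) ∧
      ∃ w, IsAdmissibleWord σ d w (σ α a) ∧ wordPerm σ w (σ α a) = a := by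
  obtain ⟨S, hS, haS⟩ := ha
  have hαa := hS.apply_mem hL haS hd
  exact ⟨⟨S, hS, hαa⟩,
    exists_isAdmissibleWord_of_reaches hL (((hS.1.2 _ hαa a).1 haS).1)⟩

end WeightMatrix

section CoherenceGraph

variable {n N : ℕ} {σ : Fin N → Equiv.Perm (Fin n)} {d : Fin N → Fin n → ℂ}
  {Nsim B : Set (Fin n)} {r : Fin n → Fin n → Prop}

lemma cEdge_prodCongr (hB : ∀ a ∈ Nsim, ∀ α, d α a ≠ 0 → σ α a ∈ B)
    (hmod : ∀ (α) (j k : Fin n), r j k → ‖d α j‖ = ‖d α k‖)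
    (hperm : ∀ (α) (j k : Fin n), r j k → σ α j ∈ B → σ α k ∈ B →
      σ α j ∈ Nsim ∧ σ α k ∈ Nsim ∧ r (σ α j) (σ α k))
    {x : Fin n × Fin n} (hx : cVert Nsim r x) {α : Fin N} (hd : d α x.1 ≠ 0) :
    cEdge σ d Nsim r x ((σ α).prodCongr (σ α) x) := by
  obtain ⟨h1, h2, hr, hne⟩ := hx
  have hd2 : d α x.2 ≠ 0 := by
    rwa [← norm_ne_zero_iff, ← hmod α _ _ hr, norm_ne_zero_iff]
  obtain ⟨m1, m2, hr'⟩ := hperm α _ _ hr (hB _ h1 α hd) (hB _ h2 α hd2)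
  exact ⟨⟨h1, h2, hr, hne⟩, ⟨m1, m2, hr', (σ α).injective.ne hne⟩, α, rfl, rfl, hd, hd2⟩

lemma reflTransGen_cEdge_wordPerm (hB : ∀ a ∈ Nsim, ∀ α, d α a ≠ 0 → σ α a ∈ B)
    (hmod : ∀ (α) (j k : Fin n), r j k → ‖d α j‖ = ‖d α k‖)
    (hperm : ∀ (α) (j k : Fin n), r j k → σ α j ∈ B → σ α k ∈ B →
      σ α j ∈ Nsim ∧ σ α k ∈ Nsim ∧ r (σ α j) (σ α k)) :
    ∀ (w : List (Fin N)) {x : Fin n × Fin n}, cVert Nsim r x → IsAdmissibleWord σ d w x.1 →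
      Relation.ReflTransGen (cEdge σ d Nsim r) x ((wordPerm σ w).prodCongr (wordPerm σ w) x)
  | [], _, _, _ => .refl
  | α :: w, x, hx, ⟨hd, hw⟩ => by
    have hedge := cEdge_prodCongr hB hmod hperm hx hd
    exact .head hedge (reflTransGen_cEdge_wordPerm hB hmod hperm w hedge.2.1 hw)

lemma cVert_of_reflTransGen_cEdge {x y : Fin n × Fin n} (hx : cVert Nsim r x)
    (h : Relation.ReflTransGen (cEdge σ d Nsim r) x y) : cVert Nsim r y := by
  rcases h.cases_tail with rfl | ⟨_, -, hedge⟩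
  · exact hx
  · exact hedge.2.1

lemma reflTransGen_cEdge_of_cEdge (hB : ∀ a ∈ Nsim, ∀ α, d α a ≠ 0 → σ α a ∈ B)
    (hreturn : ∀ a ∈ Nsim, ∀ α, d α a ≠ 0 →
      ∃ w, IsAdmissibleWord σ d w (σ α a) ∧ wordPerm σ w (σ α a) = a)
    (hmod : ∀ (α) (j k : Fin n), r j k → ‖d α j‖ = ‖d α k‖)
    (hperm : ∀ (α) (j k : Fin n), r j k → σ α j ∈ B → σ α k ∈ B →
      σ α j ∈ Nsim ∧ σ α k ∈ Nsim ∧ r (σ α j) (σ α k))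
    {x y : Fin n × Fin n} (hxy : cEdge σ d Nsim r x y) :
    Relation.ReflTransGen (cEdge σ d Nsim r) y x := by
  obtain ⟨hx, hy, α, h1, h2, hd, -⟩ := hxy
  obtain rfl : y = (σ α).prodCongr (σ α) x := Prod.ext h1.symm h2.symm
  obtain ⟨w, hw, hwj⟩ := hreturn x.1 hx.1 α hd
  set p := wordPerm σ (α :: w)
  have hpj : p x.1 = x.1 := hwj
  have hcycle : ∀ z, cVert Nsim r z ∧ z.1 = x.1 →
      (cVert Nsim r (p.prodCongr p z) ∧ (p.prodCongr p z).1 = x.1) ∧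
        Relation.ReflTransGen (cEdge σ d Nsim r) z (p.prodCongr p z) := by
    rintro z ⟨hz, hz1⟩
    have hpath := reflTransGen_cEdge_wordPerm hB hmod hperm (α :: w) hz
      (by rw [hz1]; exact ⟨hd, hw⟩)
    exact ⟨⟨cVert_of_reflTransGen_cEdge hz hpath, by simp [hz1, hpj]⟩, hpath⟩
  have hforward := reflTransGen_cEdge_wordPerm hB hmod hperm w hy hw
  exact hforward.trans (Relation.ReflTransGen.of_apply_perm _ hcycle ⟨hx, rfl⟩)

end CoherenceGraph

theorem stmt12_general (n N : ℕ) (σ : Fin N → Equiv.Perm (Fin n)) (d : Fin N → Fin n → ℂ)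
    (L : Fin N → Matrix (Fin n) (Fin n) ℂ)
    (hL : ∀ α, L α = permMat n (σ α) * Matrix.diagonal (d α))
    (Nsim : Set (Fin n)) (hNsim : Nsim ⊆ basinUnion (weightMat L))
    (r : Fin n → Fin n → Prop)
    (hmod : ∀ (α) (j k : Fin n), r j k → ‖d α j‖ = ‖d α k‖)
    (hperm : ∀ (α) (j k : Fin n), r j k →
      σ α j ∈ basinUnion (weightMat L) → σ α k ∈ basinUnion (weightMat L) →
      σ α j ∈ Nsim ∧ σ α k ∈ Nsim ∧ r (σ α j) (σ α k)) :
    ∀ x y : Fin n × Fin n, cVert Nsim r x → cVert Nsim r y →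
      Relation.ReflTransGen (cEdge σ d Nsim r) x y →
      Relation.ReflTransGen (cEdge σ d Nsim r) y x := by
  have hbasin := fun a (ha : a ∈ Nsim) α (hd : d α a ≠ 0) =>
    basinUnion_apply_mem_and_exists_return hL (hNsim ha) hd
  intro x y _ _ hxy
  refine hxy.symm_of_forall_rel fun _ _ => ?_
  exact reflTransGen_cEdge_of_cEdge (fun a ha α hd => (hbasin a ha α hd).1)
    (fun a ha α hd => (hbasin a ha α hd).2) hmod hperm

theorem stmt12 (n N : ℕ) (σ : Fin N → Equiv.Perm (Fin n)) (d : Fin N → Fin n → ℂ)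
    (L : Fin N → Matrix (Fin n) (Fin n) ℂ)
    (hL : ∀ α, L α = permMat n (σ α) * Matrix.diagonal (d α))
    (Nsim : Set (Fin n)) (hNsim : Nsim ⊆ basinUnion (weightMat L))
    (r : Fin n → Fin n → Prop)
    (hrefl : ∀ j ∈ Nsim, r j j)
    (hsymm : ∀ j k : Fin n, r j k → r k j)
    (htrans : ∀ i j k : Fin n, r i j → r j k → r i k)
    (hdom : ∀ j k : Fin n, r j k → j ∈ Nsim ∧ k ∈ Nsim)
    (hmod : ∀ (α) (j k : Fin n), r j k → ‖d α j‖ = ‖d α k‖)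
    (hperm : ∀ (α) (j k : Fin n), r j k →
      σ α j ∈ basinUnion (weightMat L) → σ α k ∈ basinUnion (weightMat L) →
      σ α j ∈ Nsim ∧ σ α k ∈ Nsim ∧ r (σ α j) (σ α k)) :
    ∀ x y : Fin n × Fin n, cVert Nsim r x → cVert Nsim r y →
      Relation.ReflTransGen (cEdge σ d Nsim r) x y →
      Relation.ReflTransGen (cEdge σ d Nsim r) y x :=
  stmt12_general n N σ d L hL Nsim hNsim r hmod hperm
end

section
/- Let L = P_σ · D be an n×n complex matrix with σ a permutation of Fin n and D diagonal, and let P be an n×n Hermitian matrix (P = Pᴴ) commuting with L. Then for all j, k ∈ Fin n: P_{j k} · |D_{j j}|² = P_{j k} · |D_{k k}|²; in particular, P_{j k} ≠ 0 implies |D_{j j}| = |D_{k k}|. -/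
/-!
`P_σ` is unitary, so `Lᴴ L = diag(|d|²)`. Since `P` is Hermitian, `P L = L P` gives `P Lᴴ = Lᴴ P`,
hence `P` commutes with `Lᴴ L`, and a matrix commuting with `diag e` satisfies `P j k * e k = e j * P j k`.
-/

open Matrix

theorem permMat_eq_permMatrix (n : ℕ) (σ : Equiv.Perm (Fin n)) :
    permMat n σ = σ⁻¹.permMatrix ℂ := by
  ext j k
  simp only [permMat, of_apply, PEquiv.toMatrix_apply, Equiv.toPEquiv_apply, Equiv.Perm.inv_def,
    Option.mem_def, Option.some.injEq, Equiv.symm_apply_eq]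

theorem IsSelfAdjoint.commute_star_mul_self_of_commute {R : Type*} [Ring R] [StarRing R] {a b : R}
    (ha : IsSelfAdjoint a) (h : Commute a b) : Commute a (star b * b) :=
  (ha.star_eq ▸ h.star_star).mul_right h

namespace Matrix

variable {ι R : Type*} [Fintype ι] [DecidableEq ι]

theorem permMatrix_mem_unitaryGroup [CommRing R] [StarRing R] (σ : Equiv.Perm ι) :
    σ.permMatrix R ∈ unitaryGroup ι R := by
  rw [mem_unitaryGroup_iff', star_eq_conjTranspose, conjTranspose_permMatrix, ← permMatrix_mul,
    mul_inv_cancel, permMatrix_one]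

theorem conjTranspose_mul_self_of_mem_unitaryGroup_mul_diagonal [CommRing R] [StarRing R]
    {U : Matrix ι ι R} (hU : U ∈ unitaryGroup ι R) (d : ι → R) :
    (U * diagonal d)ᴴ * (U * diagonal d) = diagonal fun i => star (d i) * d i := by
  rw [conjTranspose_mul, diagonal_conjTranspose, Matrix.mul_assoc, ← Matrix.mul_assoc Uᴴ,
    ← star_eq_conjTranspose, mem_unitaryGroup_iff'.mp hU, Matrix.one_mul,
    diagonal_mul_diagonal]
  rfl

theorem apply_mul_eq_mul_apply_of_commute_diagonal [Semiring R] {A : Matrix ι ι R} {e : ι → R}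
    (h : Commute A (diagonal e)) (j k : ι) : A j k * e k = e j * A j k := by
  simpa [mul_diagonal, diagonal_mul] using congrFun (congrFun h.eq j) k

end Matrix

theorem stmt15 (n : ℕ) (σ : Equiv.Perm (Fin n)) (d : Fin n → ℂ)
    (L P : Matrix (Fin n) (Fin n) ℂ)
    (hL : L = permMat n σ * Matrix.diagonal d)
    (hP : P.IsHermitian)
    (hPL : P * L = L * P) :
    ∀ j k : Fin n,
      P j k * ((‖d j‖) ^ 2 : ℂ) = P j k * ((‖d k‖) ^ 2 : ℂ) ∧
      (P j k ≠ 0 → ‖d j‖ = ‖d k‖) := by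
  have hLL : star L * L = diagonal fun j => ((‖d j‖) ^ 2 : ℂ) := by
    rw [star_eq_conjTranspose, hL, permMat_eq_permMatrix,
      conjTranspose_mul_self_of_mem_unitaryGroup_mul_diagonal (permMatrix_mem_unitaryGroup _)]
    simp only [RCLike.star_def, Complex.conj_mul']
  have hcomm : Commute P (diagonal fun j => ((‖d j‖) ^ 2 : ℂ)) :=
    hLL ▸ IsSelfAdjoint.commute_star_mul_self_of_commute hP hPL
  intro j k
  have h := apply_mul_eq_mul_apply_of_commute_diagonal hcomm j k
  refine ⟨by rw [h, mul_comm], fun hne => ?_⟩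
  have hsq : (‖d j‖) ^ 2 = (‖d k‖) ^ 2 := by
    exact_mod_cast (mul_left_cancel₀ hne (h.trans (mul_comm _ _))).symm
  exact (sq_eq_sq₀ (norm_nonneg _) (norm_nonneg _)).mp hsq
end

section
/- Let L_1, …, L_N be n×n complex matrices with L_α = P_{σ_α} · D_α, σ_α a permutation of Fin n and D_α diagonal. Suppose the digraph on Fin n with an edge from j to σ_α(j) for every α and every j with D_{α,j} ≠ 0 is strongly connected (any vertex reaches any other by a directed path). Then every diagonal complex matrix X commuting with all L_α (X·L_α = L_α·X for all α) is a scalar multiple of the identity. -/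
theorem stmt16 (n N : ℕ) (σ : Fin N → Equiv.Perm (Fin n)) (d : Fin N → Fin n → ℂ)
    (L : Fin N → Matrix (Fin n) (Fin n) ℂ)
    (hL : ∀ α, L α = permMat n (σ α) * Matrix.diagonal (d α))
    (hconn : ∀ u v : Fin n,
      Relation.ReflTransGen (fun j j' : Fin n => ∃ α, d α j ≠ 0 ∧ σ α j = j') u v)
    (x : Fin n → ℂ)
    (hX : ∀ α, Matrix.diagonal x * L α = L α * Matrix.diagonal x) :
    ∃ c : ℂ, Matrix.diagonal x = c • (1 : Matrix (Fin n) (Fin n) ℂ) := by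
  have hLentry : ∀ α j, L α (σ α j) j = d α j := by
    intro α j
    rw [hL α]
    simp [permMat, Matrix.mul_apply, Matrix.diagonal_apply, Finset.sum_ite_eq]
  have key : ∀ α j, d α j ≠ 0 → x (σ α j) = x j := by
    intro α j hd
    have := congrFun (congrFun (hX α) (σ α j)) j
    rw [Matrix.diagonal_mul, Matrix.mul_diagonal, hLentry] at this
    rw [mul_comm (d α j)] at this
    exact mul_right_cancel₀ hd this
  have hconst : ∀ u v : Fin n, x u = x v := by
    intro u v
    induction hconn u v with
    | refl => rfl
    | tail _ h ih =>
      obtain ⟨α, hd, hσ⟩ := h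
      rw [ih, ← hσ, key α _ hd]
  rcases Nat.eq_zero_or_pos n with h0 | hpos
  · subst h0
    exact ⟨0, by ext i; exact i.elim0⟩
  · refine ⟨x ⟨0, hpos⟩, ?_⟩
    ext i j
    by_cases h : i = j
    · subst h
      simp [Matrix.one_apply, hconst i ⟨0, hpos⟩]
    · simp [Matrix.diagonal_apply_ne _ h, Matrix.one_apply_ne h]
end
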